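/- arXiv:2111.00819 — 5 statements merged into one kernel-verified Lean document; each statement's English description precedes it below -/
import Mathlib

section
/- Let K be an infinite field and give S = K[x,y] the standard grading deg(x) = deg(y) = 1. Let h : ℤ_{≥0} → ℤ_{≥0} be the Hilbert function of some monomial ideal of S of finite colength. Then there exists a homogeneous ideal I ⊆ S with dim_K (S/I)_d = h(d) for all d ≥ 0 such that for every d ≥ 0, every nonzero homogeneous polynomial in I of degree d has at least h(d) + 1 monomials in its support. (Equivalently, for every d ≥ 0 the degree-d matroid M(I_d) of the tropicalization of I is the uniform matroid U_{h(d), d+1}.) -/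
/-!
Combinatorial framework for monomial ideals in `K[x,y]`, graded by
`deg x = a`, `deg y = b`.  A monomial `x^α y^β` is represented by the
pair `(α, β) : ℤ × ℤ`; it lies in `S = K[x,y]` when both entries are
nonnegative.
-/

namespace MonId

/-- A (Laurent) monomial `x^α y^β`, represented by its exponent vector. -/
abbrev Mon : Type := ℤ × ℤ

/-- `p` is a genuine monomial of `S = K[x,y]` (nonnegative exponents). -/
def inS (p : Mon) : Prop := 0 ≤ p.1 ∧ 0 ≤ p.2

/-- `M` is (the set of monomials of) a monomial ideal of `S` of finite
colength: it consists of monomials of `S`, is closed under multiplication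
by `x` and by `y`, and its complement in the monomials of `S` is finite. -/
def IsMonIdeal (M : Set Mon) : Prop :=
  (∀ p ∈ M, inS p) ∧
  (∀ p ∈ M, (p.1 + 1, p.2) ∈ M ∧ (p.1, p.2 + 1) ∈ M) ∧
  {p : Mon | inS p ∧ p ∉ M}.Finite

/-- `p` is a minimal monomial generator of the monomial ideal `M`. -/
def IsMinGen (M : Set Mon) (p : Mon) : Prop :=
  p ∈ M ∧ (p.1 - 1, p.2) ∉ M ∧ (p.1, p.2 - 1) ∉ M

/-- `m 0, m 1, …, m e` is the list of minimal generators of `M`, in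
increasing lexicographic order `≺` with `x ≺ y` (equivalently, with
strictly increasing `y`-exponents). -/
def IsGenSeq (M : Set Mon) (e : ℕ) (m : ℕ → Mon) : Prop :=
  (∀ k ≤ e, IsMinGen M (m k)) ∧
  (∀ k, k < e → (m k).2 < (m (k + 1)).2) ∧
  (∀ p, IsMinGen M p → ∃ k ≤ e, m k = p)

/-- Multiplication of the monomial `p` by `r^ℓ`, where `r = x^b y^{-a}`. -/
def rpow (a b ℓ : ℤ) (p : Mon) : Mon := (p.1 + b * ℓ, p.2 - a * ℓ)

/-- `w m i` is `w_i = lcm(m_{i-1}, m_i)` (componentwise max of exponents). -/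
def w (m : ℕ → Mon) (i : ℕ) : Mon :=
  (max (m (i - 1)).1 (m i).1, max (m (i - 1)).2 (m i).2)

/-- The set `T⁺(M)` of positive significant arrows `(i, ℓ)`:
`1 ≤ i ≤ e`, `ℓ ≥ 1`, `m_i r^ℓ ∈ S ∖ M` and `w_i r^ℓ ∈ M`. -/
def Tplus (a b : ℤ) (M : Set Mon) (e : ℕ) (m : ℕ → Mon) : Set (ℕ × ℤ) :=
  {q | 1 ≤ q.1 ∧ q.1 ≤ e ∧ 1 ≤ q.2 ∧ inS (rpow a b q.2 (m q.1)) ∧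
    rpow a b q.2 (m q.1) ∉ M ∧ rpow a b q.2 (w m q.1) ∈ M}

/-- The set `T⁻(M)` of negative significant arrows `(i, ℓ)`:
`0 ≤ i ≤ e - 1`, `ℓ ≤ -1`, `m_i r^ℓ ∈ S ∖ M` and `w_{i+1} r^ℓ ∈ M`. -/
def Tminus (a b : ℤ) (M : Set Mon) (e : ℕ) (m : ℕ → Mon) : Set (ℕ × ℤ) :=
  {q | q.1 < e ∧ q.2 ≤ -1 ∧ inS (rpow a b q.2 (m q.1)) ∧
    rpow a b q.2 (m q.1) ∉ M ∧ rpow a b q.2 (w m (q.1 + 1)) ∈ M}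

/-- `j⁺(p) = max {i : m_i divides p}`. -/
def jplus (e : ℕ) (m : ℕ → Mon) (p : Mon) : ℕ :=
  Nat.findGreatest (fun i => (m i).1 ≤ p.1 ∧ (m i).2 ≤ p.2) e

/-- `j⁻(p) = min {i : m_i divides p}`. -/
noncomputable def jminus (e : ℕ) (m : ℕ → Mon) (p : Mon) : ℕ :=
  sInf {i | i ≤ e ∧ (m i).1 ≤ p.1 ∧ (m i).2 ≤ p.2}

/-- `IsPath a b M e m i P`: `P` is a path from the generator `m_i`, i.e. a
finite sequence of positive significant arrows whose first arrow `(i₁, ℓ₁)`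
has `i₁ ≤ i`, and whose tail is a path from `m_{j⁺(w_{i₁} r^{ℓ₁})}`.
The empty sequence is a path from every generator. -/
def IsPath (a b : ℤ) (M : Set Mon) (e : ℕ) (m : ℕ → Mon) : ℕ → List (ℕ × ℤ) → Prop
  | _, [] => True
  | i, q :: rest => q ∈ Tplus a b M e m ∧ q.1 ≤ i ∧
      IsPath a b M e m (jplus e m (rpow a b q.2 (w m q.1))) rest

/-- The length `l(P) = ℓ₁ + ⋯ + ℓ_s` of a path. -/
def llen (P : List (ℕ × ℤ)) : ℤ := (P.map Prod.snd).sum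

/-- `lm j` is the largest `ℓ` with `(j, ℓ) ∈ T⁺(M)`, and is `0` when no
such arrow exists. -/
def IsLmax (Tp : Set (ℕ × ℤ)) (lm : ℕ → ℤ) : Prop :=
  ∀ j : ℕ, (∀ ℓ : ℤ, (j, ℓ) ∈ Tp → ℓ ≤ lm j) ∧
    ((∃ ℓ : ℤ, (j, ℓ) ∈ Tp) → (j, lm j) ∈ Tp) ∧
    ((¬ ∃ ℓ : ℤ, (j, ℓ) ∈ Tp) → lm j = 0)

/-- `IsZSeq a b e m lm k L`: `L` is the sequence `(z_1, z_2, …)` of arrows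
produced by the greedy procedure started at index `k`: while `i ≥ 1`, if
`ℓ_i > 0` record the arrow `(i, ℓ_i)` and jump to `j⁺(w_i r^{ℓ_i})`,
otherwise decrease `i` by one; stop when `i ≤ 0`. -/
inductive IsZSeq (a b : ℤ) (e : ℕ) (m : ℕ → Mon) (lm : ℕ → ℤ) : ℕ → List (ℕ × ℤ) → Prop where
  | zero : IsZSeq a b e m lm 0 []
  | skip {i : ℕ} {L : List (ℕ × ℤ)} : 1 ≤ i → lm i ≤ 0 →
      IsZSeq a b e m lm (i - 1) L → IsZSeq a b e m lm i L
  | step {i : ℕ} {L : List (ℕ × ℤ)} : 1 ≤ i → 0 < lm i →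
      IsZSeq a b e m lm (jplus e m (rpow a b (lm i) (w m i))) L →
      IsZSeq a b e m lm i ((i, lm i) :: L)

/-- `D` is a direct path from `m_k`: a path which is either a nonempty
initial segment `(z_1, …, z_s)` of the greedy sequence from `k`, or
`(z_1, …, z_s, (i', ℓ'))` where `i'` is the index of `z_{s+1}` and
`1 ≤ ℓ' < ℓ_{i'}`. -/
def IsDirectPath (a b : ℤ) (M : Set Mon) (e : ℕ) (m : ℕ → Mon) (lm : ℕ → ℤ)
    (k : ℕ) (D : List (ℕ × ℤ)) : Prop :=
  IsPath a b M e m k D ∧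
  ∃ L, IsZSeq a b e m lm k L ∧
    ((∃ s : ℕ, 0 < s ∧ s ≤ L.length ∧ D = L.take s) ∨
     (∃ (s : ℕ) (z : ℕ × ℤ) (ℓ' : ℤ), L[s]? = some z ∧ 1 ≤ ℓ' ∧ ℓ' < z.2 ∧
       D = L.take s ++ [(z.1, ℓ')]))

/-- The monomial `c_P = c_{i₁}^{ℓ₁} ⋯ c_{i_s}^{ℓ_s}` associated to a path,
as an element of the polynomial ring with variables `c_i^ℓ` (indexed by
pairs `(i, ℓ)`). -/
noncomputable def cP (K : Type*) [CommSemiring K] (P : List (ℕ × ℤ)) : MvPolynomial (ℕ × ℤ) K :=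
  (P.map MvPolynomial.X).prod

end MonId

namespace MonId

/-- The monomial `x^α y^β` of `K[x,y] = K[X 0, X 1]` associated to
`p = (α, β)`. -/
noncomputable def monOf (K : Type*) [CommSemiring K] (p : Mon) :
    MvPolynomial (Fin 2) K :=
  MvPolynomial.X 0 ^ p.1.toNat * MvPolynomial.X 1 ^ p.2.toNat

/-- The ideal of `K[x,y]` generated by the monomials in `A`. -/
noncomputable def idealOf (K : Type*) [CommSemiring K] (A : Set Mon) :
    Ideal (MvPolynomial (Fin 2) K) :=
  Ideal.span (monOf K '' A)

/-- The Hilbert function of `K[x,y]/I` for the grading with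
`deg x = wt 0`, `deg y = wt 1`: the `K`-dimension of the image of the
space of weighted-degree-`d` homogeneous polynomials in the quotient. -/
noncomputable def HF (K : Type*) [CommRing K] (wt : Fin 2 → ℕ)
    (I : Ideal (MvPolynomial (Fin 2) K)) (d : ℕ) : ℕ :=
  Module.finrank K
    ((MvPolynomial.weightedHomogeneousSubmodule K wt d).map
      (Ideal.Quotient.mkₐ K I).toLinearMap)

/-- The lexicographic order on exponent vectors with `x ≺ y` (compare the
exponent of `y` first).  `lexYle s t` means `s ⪯ t`. -/
def lexYle (s t : Fin 2 →₀ ℕ) : Prop := s 1 < t 1 ∨ (s 1 = t 1 ∧ s 0 ≤ t 0)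

/-- The lexicographic order on exponent vectors with `y ≺ x` (compare the
exponent of `x` first).  `lexXle s t` means `s ⪯ t`. -/
def lexXle (s t : Fin 2 →₀ ℕ) : Prop := s 0 < t 0 ∨ (s 0 = t 0 ∧ s 1 ≤ t 1)

/-- The initial ideal of `I` for a monomial order `le`: the ideal
generated by the `le`-largest monomials of the nonzero elements of `I`. -/
noncomputable def initialIdeal (K : Type*) [CommSemiring K]
    (le : (Fin 2 →₀ ℕ) → (Fin 2 →₀ ℕ) → Prop)
    (I : Ideal (MvPolynomial (Fin 2) K)) : Ideal (MvPolynomial (Fin 2) K) :=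
  Ideal.span {g | ∃ f ∈ I, f ≠ 0 ∧ ∃ s ∈ f.support,
    (∀ t ∈ f.support, le t s) ∧ g = MvPolynomial.monomial s (1 : K)}

end MonId

open MonId

/-! The Hilbert function `h` of a finite-colength monomial ideal satisfies `h d ≤ d + 1`,
`h (d + 1) ≤ h d` as soon as `h d ≤ d`, and `h d = 0` for `d > D`. Pick `t ∈ K` with
`t ^ 0, …, t ^ D` distinct and let `I_d` be the degree-`d` forms vanishing at the points
`(t ^ i : 1)`, `i < h d`. Lagrange interpolation makes these `h d` conditions independent, so
`dim (S/I)_d = h d`, and the inequalities on `h` make `⊕ I_d` an ideal. A nonzero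
`f = ∑ c_m x^(m 0) y^(d - m 0) ∈ I_d` with at most `h d` terms would give the nonsingular
Vandermonde system `∑ c_m (t ^ m 0) ^ i = 0`, `i < h d`.
-/

open MvPolynomial Finset

theorem Finset.eq_zero_of_forall_sum_mul_pow_eq_zero {ι R : Type*} [CommRing R] [IsDomain R]
    {s : Finset ι} {a x : ι → R} (hx : Set.InjOn x s)
    (h : ∀ i < #s, ∑ j ∈ s, a j * x j ^ i = 0) : ∀ j ∈ s, a j = 0 := by
  let e := s.equivFin
  have hv := Matrix.eq_zero_of_forall_pow_sum_mul_pow_eq_zero (f := fun k => x (e.symm k))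
    (v := fun k => a (e.symm k))
    (fun k l hkl => e.symm.injective (Subtype.ext (hx (e.symm k).2 (e.symm l).2 hkl)))
    (fun i => by
      have hi := h i i.2
      rwa [← s.sum_coe_sort, ← e.symm.sum_comp] at hi)
  intro j hj
  simpa [e] using congrFun hv (e ⟨j, hj⟩)

theorem exists_injOn_pow (K : Type*) [Field K] [Infinite K] (D : ℕ) :
    ∃ t : K, Set.InjOn (t ^ ·) (Set.Iic D) := by
  classical
  obtain ⟨t, ht⟩ := Infinite.exists_notMem_finset
    (insert 0 ((Icc 1 D).biUnion fun m => (Polynomial.nthRoots m (1 : K)).toFinset))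
  simp only [mem_insert, mem_biUnion, mem_Icc, Multiset.mem_toFinset, not_or, not_exists,
    not_and] at ht
  have key : ∀ a b, a ≤ b → b ≤ D → t ^ a = t ^ b → a = b := by
    intro a b hab hb he
    by_contra hne
    refine ht.2 (b - a) ⟨by omega, by omega⟩
      ((Polynomial.mem_nthRoots (by omega)).mpr (mul_left_cancel₀ (pow_ne_zero a ht.1) ?_))
    rw [← pow_add, Nat.add_sub_cancel' hab, mul_one, he]
  refine ⟨t, fun a ha b hb he => ?_⟩
  rcases le_total a b with hab | hba
  exacts [key a b hab hb he, (key b a hba ha he.symm).symm]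

theorem Submodule.finrank_map_eq_of_ker_iff {K V W U : Type*} [Field K] [AddCommGroup V]
    [Module K V] [AddCommGroup W] [Module K W] [AddCommGroup U] [Module K U]
    (p : Submodule K V) [FiniteDimensional K p] (q : V →ₗ[K] W) (ψ : V →ₗ[K] U)
    (hψ : ∀ u, ∃ v ∈ p, ψ v = u) (hker : ∀ v ∈ p, q v = 0 ↔ ψ v = 0) :
    Module.finrank K (p.map q) = Module.finrank K U := by
  have hq := (q.comp p.subtype).finrank_range_add_finrank_ker
  have hψ' := (ψ.comp p.subtype).finrank_range_add_finrank_ker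
  have hk : LinearMap.ker (q.comp p.subtype) = LinearMap.ker (ψ.comp p.subtype) := by
    ext ⟨v, hv⟩
    exact hker v hv
  have hr : LinearMap.range (ψ.comp p.subtype) = ⊤ := by
    refine LinearMap.range_eq_top.mpr fun u => ?_
    obtain ⟨v, hv, rfl⟩ := hψ u
    exact ⟨⟨v, hv⟩, rfl⟩
  rw [LinearMap.range_comp, Submodule.range_subtype, hk] at hq
  rw [hr, finrank_top] at hψ'
  omega

namespace MvPolynomial

instance {σ R : Type*} [CommSemiring R] [Finite σ] (n : ℕ) :
    Module.Finite R (homogeneousSubmodule σ R n) :=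
  Module.Finite.iff_fg.mpr (homogeneousSubmodule_fg σ R n)

variable {K : Type*} [Field K] {d : ℕ} {f : MvPolynomial (Fin 2) K}

theorem IsHomogeneous.add_eq_of_mem_support (hf : f.IsHomogeneous d) {m : Fin 2 →₀ ℕ}
    (hm : m ∈ f.support) : m 0 + m 1 = d := by
  simpa [Finsupp.weight_apply, Finsupp.sum_fintype, Fin.sum_univ_two] using
    hf (mem_support_iff.mp hm)

theorem IsHomogeneous.injOn_apply_zero_support (hf : f.IsHomogeneous d) :
    Set.InjOn (· 0) (f.support : Set (Fin 2 →₀ ℕ)) := by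
  intro m hm n hn hmn
  have := hf.add_eq_of_mem_support hm
  have := hf.add_eq_of_mem_support hn
  ext i
  fin_cases i <;> simp_all; omega

theorem IsHomogeneous.card_support_le (hf : f.IsHomogeneous d) : #f.support ≤ d + 1 := by
  simpa using card_le_card_of_injOn (· 0)
    (fun m hm => mem_range.mpr (by have := hf.add_eq_of_mem_support hm; simp only; omega))
    hf.injOn_apply_zero_support

theorem aeval_cons_one_eq_sum (t : K) (f : MvPolynomial (Fin 2) K) :
    aeval ![t, 1] f = ∑ m ∈ f.support, coeff m f * t ^ m 0 := by
  simp [eval_eq', Fin.prod_univ_two]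

end MvPolynomial

namespace MonId

variable {K : Type*} [Field K] {A : Set Mon} {d : ℕ} {f : MvPolynomial (Fin 2) K}

theorem weightedHomogeneousSubmodule_one_one (d : ℕ) :
    weightedHomogeneousSubmodule K ![1, 1] d = homogeneousSubmodule (Fin 2) K d := by
  rw [show (![1, 1] : Fin 2 → ℕ) = 1 by ext i; fin_cases i <;> rfl]
  rfl

theorem HF_eq_finrank_of_ker_iff {U : Type*} [AddCommGroup U] [Module K U]
    (I : Ideal (MvPolynomial (Fin 2) K)) (d : ℕ) (ψ : MvPolynomial (Fin 2) K →ₗ[K] U)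
    (hψ : ∀ u, ∃ f, f.IsHomogeneous d ∧ ψ f = u)
    (hker : ∀ f : MvPolynomial (Fin 2) K, f.IsHomogeneous d → (f ∈ I ↔ ψ f = 0)) :
    HF K ![1, 1] I d = Module.finrank K U := by
  rw [HF, weightedHomogeneousSubmodule_one_one]
  refine Submodule.finrank_map_eq_of_ker_iff _ _ ψ hψ fun f hf => ?_
  rw [← hker f hf]
  exact Ideal.Quotient.eq_zero_iff_mem

theorem IsMonIdeal.mem_of_le (hA : IsMonIdeal A) {p q : Mon} (hp : p ∈ A) (hpq : p ≤ q) :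
    q ∈ A := by
  have hq₁ : (q.1, p.2) ∈ A := Int.leInduction (motive := fun n _ => (n, p.2) ∈ A) hp
    (fun _ _ hn => (hA.2.1 _ hn).1) q.1 hpq.1
  exact Int.leInduction (motive := fun n _ => (q.1, n) ∈ A) hq₁
    (fun _ _ hn => (hA.2.1 _ hn).2) q.2 hpq.2

open Classical in
noncomputable def stdExps (A : Set Mon) (d : ℕ) : Finset ℕ :=
  (range (d + 1)).filter fun e => ((e : ℤ), (d : ℤ) - e) ∉ A

theorem mem_stdExps {e : ℕ} :
    e ∈ stdExps A d ↔ e ≤ d ∧ ((e : ℤ), (d : ℤ) - e) ∉ A := by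
  simp [stdExps]

theorem card_stdExps_le (A : Set Mon) (d : ℕ) : #(stdExps A d) ≤ d + 1 :=
  (card_le_card fun _ he => mem_range.mpr (Nat.lt_succ_of_le (mem_stdExps.mp he).1)).trans
    (card_range _).le

theorem IsMonIdeal.exists_stdExps_eq_empty (hA : IsMonIdeal A) :
    ∃ D, ∀ d, D < d → stdExps A d = ∅ := by
  obtain ⟨B, hB⟩ := hA.2.2.bddAbove
  refine ⟨(B.1 + B.2).toNat, fun d hd => eq_empty_of_forall_notMem fun e he => ?_⟩
  rw [mem_stdExps] at he
  obtain ⟨h₁, h₂⟩ := Prod.le_def.mp (hB ⟨⟨by positivity, by omega⟩, he.2⟩)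
  simp only at h₁ h₂
  omega

theorem IsMonIdeal.card_stdExps_succ_le (hA : IsMonIdeal A) (hd : #(stdExps A d) ≤ d) :
    #(stdExps A (d + 1)) ≤ #(stdExps A d) := by
  have shift_y : ∀ e ∈ stdExps A (d + 1), e ≤ d → e ∈ stdExps A d := fun e he hed =>
    mem_stdExps.mpr ⟨hed, fun hmem => (mem_stdExps.mp he).2
      (hA.mem_of_le hmem (Prod.mk_le_mk.mpr ⟨le_rfl, by omega⟩))⟩
  have shift_x : ∀ e ∈ stdExps A (d + 1), 1 ≤ e → e - 1 ∈ stdExps A d := fun e he he1 =>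
    mem_stdExps.mpr ⟨by have := (mem_stdExps.mp he).1; omega, fun hmem => (mem_stdExps.mp he).2
      (hA.mem_of_le hmem (Prod.mk_le_mk.mpr ⟨by omega, by omega⟩))⟩
  obtain ⟨a, had, ha⟩ : ∃ a ≤ d, a ∉ stdExps A d := by
    by_contra! hall
    have := card_le_card fun e he => hall e (Nat.lt_succ_iff.mp (mem_range.mp he))
    rw [card_range] at this
    omega
  have hne : ∀ e ∈ stdExps A (d + 1), e ≠ a := fun e he hea => ha (shift_y a (hea ▸ he) had)
  -- The exponent `a` is excluded in degree `d + 1`; shift the exponents above it down by one.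
  refine card_le_card_of_injOn (fun e => if e < a then e else e - 1) (fun e he => ?_) ?_
  · have := hne e he
    dsimp only
    split_ifs
    · exact shift_y e he (by omega)
    · exact shift_x e he (by omega)
  · intro e he e' he' hee'
    have := hne e he
    have := hne e' he'
    dsimp only at hee'
    split_ifs at hee' <;> omega

theorem monOf_eq_monomial (p : Mon) :
    monOf K p = monomial (Finsupp.single 0 p.1.toNat + Finsupp.single 1 p.2.toNat) 1 := by
  rw [monOf, X_pow_eq_monomial, X_pow_eq_monomial, monomial_mul, mul_one]

theorem IsMonIdeal.mem_idealOf_iff (hA : IsMonIdeal A) :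
    f ∈ idealOf K A ↔ ∀ m ∈ f.support, ((m 0 : ℤ), (m 1 : ℤ)) ∈ A := by
  rw [idealOf, funext monOf_eq_monomial, ← Set.image_image (fun s => monomial s (1 : K)),
    mem_ideal_span_monomial_image]
  refine forall₂_congr fun m _ => ⟨?_, fun hm => ⟨_, ⟨_, hm, rfl⟩, ?_⟩⟩
  · rintro ⟨_, ⟨p, hp, rfl⟩, hle⟩
    have := hA.1 p hp
    have h₀ := hle 0
    have h₁ := hle 1
    simp at h₀ h₁
    exact hA.mem_of_le hp (Prod.mk_le_mk.mpr ⟨by omega, by omega⟩)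
  · simp [Finsupp.le_def, Fin.forall_fin_two]

theorem IsMonIdeal.mem_idealOf_iff_of_isHomogeneous (hA : IsMonIdeal A)
    (hf : f.IsHomogeneous d) : f ∈ idealOf K A ↔
      ∀ e ∈ stdExps A d, coeff (Finsupp.single 0 e + Finsupp.single 1 (d - e)) f = 0 := by
  rw [hA.mem_idealOf_iff]
  refine ⟨fun hsupp e he => ?_, fun hstd m hm => ?_⟩
  · by_contra hne
    have := hsupp _ (mem_support_iff.mpr hne)
    simp at this
    exact (mem_stdExps.mp he).2 (by rwa [Nat.cast_sub (mem_stdExps.mp he).1] at this)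
  · have hsum := hf.add_eq_of_mem_support hm
    by_contra hnot
    have hm' : Finsupp.single 0 (m 0) + Finsupp.single 1 (d - m 0) = m := by
      ext i
      fin_cases i <;> simp; omega
    refine mem_support_iff.mp hm (hm' ▸ hstd (m 0) (mem_stdExps.mpr ⟨by omega, ?_⟩))
    rwa [show (d : ℤ) - m 0 = m 1 by omega]

theorem IsMonIdeal.HF_idealOf (hA : IsMonIdeal A) (d : ℕ) :
    HF K ![1, 1] (idealOf K A) d = #(stdExps A d) := by
  classical
  rw [HF_eq_finrank_of_ker_iff _ d (LinearMap.pi fun e : stdExps A d =>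
      lcoeff K (Finsupp.single 0 (e : ℕ) + Finsupp.single 1 (d - e))) (fun u => ?_)
      (fun f hf => ?_), Module.finrank_fintype_fun_eq_card, Fintype.card_coe]
  · set p : Polynomial K := ∑ e : stdExps A d, Polynomial.monomial e (u e)
    refine ⟨p.homogenize d, p.isHomogeneous_homogenize, funext fun e => ?_⟩
    have := (mem_stdExps.mp e.2).1
    simp [p, Polynomial.coeff_homogenize, Polynomial.coeff_monomial, this]
  · rw [hA.mem_idealOf_iff_of_isHomogeneous hf]
    simp [funext_iff]

noncomputable def vanishingForms (c : ℕ → K) (k d : ℕ) :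
    Submodule K (MvPolynomial (Fin 2) K) :=
  homogeneousSubmodule (Fin 2) K d ⊓ ⨅ i : Fin k, LinearMap.ker (aeval ![c i, 1]).toLinearMap

variable {c : ℕ → K} {h : ℕ → ℕ} {k : ℕ}

theorem mem_vanishingForms :
    f ∈ vanishingForms c k d ↔ f.IsHomogeneous d ∧ ∀ i : Fin k, aeval ![c i, 1] f = 0 := by
  simp [vanishingForms, Submodule.mem_iInf]

theorem X_mul_mem_vanishingForms {k' : ℕ} (hk : k' ≤ k) (j : Fin 2)
    (hf : f ∈ vanishingForms c k d) : X j * f ∈ vanishingForms c k' (d + 1) := by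
  rw [mem_vanishingForms] at hf ⊢
  refine ⟨add_comm 1 d ▸ (isHomogeneous_X K j).mul hf.1, fun i => ?_⟩
  rw [map_mul, hf.2 ⟨i, i.2.trans_le hk⟩, mul_zero]

theorem exists_isHomogeneous_aeval_eq (hk : k ≤ d + 1)
    (hc : Function.Injective fun i : Fin k => c i) (u : Fin k → K) :
    ∃ f : MvPolynomial (Fin 2) K,
      f.IsHomogeneous d ∧ ∀ i : Fin k, aeval ![c i, 1] f = u i := by
  set p := Lagrange.interpolate univ (fun i : Fin k => c i) u
  have hinj : Set.InjOn (fun i : Fin k => c i) (univ : Finset (Fin k)) := hc.injOn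
  have hp : p.natDegree ≤ d := by
    have hdeg := Lagrange.degree_interpolate_lt (r := u) hinj
    rw [card_univ, Fintype.card_fin] at hdeg
    rcases eq_or_ne p 0 with hp0 | hp0
    · simp [hp0]
    · exact Nat.lt_succ_iff.mp ((Polynomial.natDegree_lt_iff_degree_lt hp0).mpr
        (hdeg.trans_le (by exact_mod_cast hk)))
  refine ⟨p.homogenize d, p.isHomogeneous_homogenize, fun i => ?_⟩
  rw [Polynomial.aeval_homogenize_of_eq_one hp _ rfl, Polynomial.coe_aeval_eq_eval]
  exact Lagrange.eval_interpolate_at_node u hinj (mem_univ i)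

theorem lt_card_support_of_mem_vanishingForms {t : K} (ht : Set.InjOn (t ^ ·) (Set.Iic d))
    (hf : f ∈ vanishingForms (t ^ ·) k d) (hf0 : f ≠ 0) : k < #f.support := by
  rw [mem_vanishingForms] at hf
  by_contra! hk
  have hmaps : Set.MapsTo (· 0) (f.support : Set (Fin 2 →₀ ℕ)) (Set.Iic d) := fun m hm => by
    have := hf.1.add_eq_of_mem_support hm
    simp only [Set.mem_Iic]
    omega
  have hcoeff := eq_zero_of_forall_sum_mul_pow_eq_zero
    (ht.comp hf.1.injOn_apply_zero_support hmaps) fun i hi => by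
      simpa [aeval_cons_one_eq_sum, ← pow_mul, mul_comm i] using hf.2 ⟨i, hi.trans_le hk⟩
  obtain ⟨m, hm⟩ := support_nonempty.mpr hf0
  exact mem_support_iff.mp hm (hcoeff m hm)

theorem vanishingForms_eq_bot {t : K} (ht : Set.InjOn (t ^ ·) (Set.Iic d)) :
    vanishingForms (t ^ ·) (d + 1) d = ⊥ := by
  refine (Submodule.eq_bot_iff _).mpr fun f hf => ?_
  by_contra hf0
  have := (mem_vanishingForms.mp hf).1.card_support_le
  have := lt_card_support_of_mem_vanishingForms ht hf hf0
  omega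

theorem homogeneousComponent_mem_vanishingForms (hf : f ∈ ⨆ d, vanishingForms c (h d) d)
    (d : ℕ) : homogeneousComponent d f ∈ vanishingForms c (h d) d := by
  induction hf using Submodule.iSup_induction' with
  | mem e g hg =>
    rw [homogeneousComponent_of_mem (mem_vanishingForms.mp hg).1]
    split_ifs with hde
    · exact hde ▸ hg
    · exact zero_mem _
  | zero => simp
  | add g g' _ _ hg hg' => simpa using add_mem hg hg'

theorem X_mul_mem_iSup_vanishingForms
    (hmul : ∀ d, h (d + 1) ≤ h d ∨ vanishingForms c (h d) d = ⊥) (j : Fin 2)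
    (hf : f ∈ ⨆ d, vanishingForms c (h d) d) : X j * f ∈ ⨆ d, vanishingForms c (h d) d := by
  rw [← sum_homogeneousComponent f, mul_sum]
  refine sum_mem fun d _ => ?_
  have hd := homogeneousComponent_mem_vanishingForms hf d
  rcases hmul d with hle | hbot
  · exact Submodule.mem_iSup_of_mem (d + 1) (X_mul_mem_vanishingForms hle j hd)
  · rw [hbot, Submodule.mem_bot] at hd
    simp [hd]

variable (c h) in
noncomputable def genericIdeal
    (hmul : ∀ d, h (d + 1) ≤ h d ∨ vanishingForms c (h d) d = ⊥) :
    Ideal (MvPolynomial (Fin 2) K) where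
  __ := ⨆ d, vanishingForms c (h d) d
  smul_mem' r f hf := by
    induction r using MvPolynomial.induction_on generalizing f with
    | C a => simpa [C_mul'] using Submodule.smul_mem _ a hf
    | add p q hp hq => simpa [add_mul] using add_mem (hp _ hf) (hq _ hf)
    | mul_X p j hp => simpa [mul_assoc] using hp _ (X_mul_mem_iSup_vanishingForms hmul j hf)

variable {hmul : ∀ d, h (d + 1) ≤ h d ∨ vanishingForms c (h d) d = ⊥}

theorem homogeneousComponent_mem_genericIdeal (hf : f ∈ genericIdeal c h hmul) (d : ℕ) :
    homogeneousComponent d f ∈ genericIdeal c h hmul :=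
  Submodule.mem_iSup_of_mem (ι := ℕ) d (homogeneousComponent_mem_vanishingForms hf d)

theorem mem_genericIdeal_iff (hf : f.IsHomogeneous d) :
    f ∈ genericIdeal c h hmul ↔ f ∈ vanishingForms c (h d) d := by
  refine ⟨fun hI => ?_, fun hV => Submodule.mem_iSup_of_mem (ι := ℕ) d hV⟩
  simpa [homogeneousComponent_of_mem hf] using homogeneousComponent_mem_vanishingForms hI d

theorem HF_genericIdeal (hd : h d ≤ d + 1) (hc : Function.Injective fun i : Fin (h d) => c i) :
    HF K ![1, 1] (genericIdeal c h hmul) d = h d := by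
  rw [HF_eq_finrank_of_ker_iff _ d
    (LinearMap.pi fun i : Fin (h d) => (aeval ![c i, 1]).toLinearMap)
    (fun u => by simpa [funext_iff] using exists_isHomogeneous_aeval_eq hd hc u)
    (fun f hf => by simp [mem_genericIdeal_iff hf, mem_vanishingForms, hf, funext_iff]),
    Module.finrank_fin_fun]

theorem exists_uniform_ideal (K : Type*) [Field K] [Infinite K] (h : ℕ → ℕ) (D : ℕ)
    (hle : ∀ d, h d ≤ d + 1) (hmac : ∀ d, h d ≤ d → h (d + 1) ≤ h d)
    (hzero : ∀ d, D < d → h d = 0) :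
    ∃ I : Ideal (MvPolynomial (Fin 2) K),
      (∀ f ∈ I, ∀ d : ℕ, homogeneousComponent d f ∈ I) ∧
      (∀ d : ℕ, HF K ![1, 1] I d = h d) ∧
      (∀ d : ℕ, ∀ f ∈ I, f.IsHomogeneous d → f ≠ 0 → h d + 1 ≤ #f.support) := by
  obtain ⟨t, ht⟩ := exists_injOn_pow K D
  have ht' : ∀ d, 0 < h d → Set.InjOn (t ^ ·) (Set.Iic d) := fun d hd =>
    ht.mono (Set.Iic_subset_Iic.mpr (by by_contra; have := hzero d (by omega); omega))
  have hmul : ∀ d, h (d + 1) ≤ h d ∨ vanishingForms (t ^ ·) (h d) d = ⊥ := fun d => by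
    rcases (hle d).lt_or_eq with hlt | heq
    · exact .inl (hmac d (by omega))
    · exact .inr (heq ▸ vanishingForms_eq_bot (ht' d (by omega)))
  have hIic : ∀ d (i : Fin (h d)), (i : ℕ) ∈ Set.Iic d := fun d i =>
    Nat.lt_succ_iff.mp (i.2.trans_le (hle d))
  refine ⟨genericIdeal (t ^ ·) h hmul, fun f hf d => homogeneousComponent_mem_genericIdeal hf d,
    fun d => HF_genericIdeal (hle d) fun i j hij => Fin.ext (ht' d i.pos (hIic d i) (hIic d j) hij),
    fun d f hf hhom hf0 => ?_⟩
  rcases Nat.eq_zero_or_pos (h d) with h0 | hpos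
  · simpa [h0] using support_nonempty.mpr hf0
  · exact lt_card_support_of_mem_vanishingForms (ht' d hpos)
      ((mem_genericIdeal_iff hhom).mp hf) hf0

end MonId

/-- Theorem `t:tropicalideal`.  Let `K` be an infinite
field and give `S = K[x,y]` the standard grading.  If `h` is the Hilbert
function of some finite-colength monomial ideal of `S`, then there is a
homogeneous ideal `I ⊆ S` with Hilbert function `h` such that for every
`d ≥ 0`, every nonzero homogeneous polynomial of degree `d` in `I` has at
least `h(d) + 1` monomials in its support (i.e. every degree-`d` matroid
of `trop(I)` is the uniform matroid `U_{h(d), d+1}`). -/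
theorem generic_tropicalization_is_uniform
    (K : Type*) [Field K] [Infinite K]
    (h : ℕ → ℕ)
    (A : Set Mon) (hA : IsMonIdeal A)
    (hHA : ∀ d : ℕ, HF K ![1, 1] (idealOf K A) d = h d) :
    ∃ I : Ideal (MvPolynomial (Fin 2) K),
      (∀ f ∈ I, ∀ d : ℕ, MvPolynomial.homogeneousComponent d f ∈ I) ∧
      (∀ d : ℕ, HF K ![1, 1] I d = h d) ∧
      (∀ d : ℕ, ∀ f ∈ I, f.IsHomogeneous d → f ≠ 0 →
        h d + 1 ≤ f.support.card) := by
  obtain rfl : h = fun d => #(stdExps A d) := funext fun d => by rw [← hHA d, hA.HF_idealOf]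
  obtain ⟨D, hD⟩ := hA.exists_stdExps_eq_empty
  exact exists_uniform_ideal K _ D (card_stdExps_le A) (fun _ => hA.card_stdExps_succ_le)
    (fun d hd => by simp [hD d hd])
end

section
/- Give S = K[x,y] the standard grading (a = b = 1, r = x/y) and let M be a monomial ideal of finite colength with T⁻(M) = ∅, so that its minimal generators are m_k = x^{a_k} y^k for 0 ≤ k ≤ e. Fix k ≥ 0 such that m_k r ∈ S ∖ M. If 0 < ℓ ≤ k and m_k r^ℓ ∈ S ∖ M, then there exists a direct path from m_k of length ℓ. -/
open MonId

/-!
With `a = b = 1` and no negative significant arrows, the generators are forced to be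
`m_j = x^{α_j} y^j` with `α` strictly decreasing, so `x^u y^n ∈ M ↔ α_n ≤ u`, and an arrow
`(i, ℓ)` lands at `j⁺(w_i r^ℓ) = i - ℓ`. The arrows leaving `m_i` then have lengths forming an
interval `[1, ℓ_i]`, and when `ℓ_i < ℓ` the failure of `(i, ℓ_i + 1)` to be an arrow says exactly
that `(i - ℓ_i, 1)` is one. So a length `ℓ ≤ k` is reached by following greedy arrows
`(k, ℓ_k)`, `(k - ℓ_k, ℓ_{k - ℓ_k})`, … and finishing with a shorter arrow from the last index.
-/

namespace MonId

variable {M : Set Mon} {e : ℕ} {m : ℕ → Mon}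

namespace IsMonIdeal

theorem mem_of_le_s3 (hM : IsMonIdeal M) {p q : Mon} (hp : p ∈ M) (hpq : p ≤ q) : q ∈ M := by
  have hx : ∀ u, p.1 ≤ u → (u, p.2) ∈ M := by
    intro u hu
    induction u, hu using Int.leInduction with
    | base => exact hp
    | succ u _ ih => exact (hM.2.1 _ ih).1
  have hy : ∀ v, p.2 ≤ v → (q.1, v) ∈ M := by
    intro v hv
    induction v, hv using Int.leInduction with
    | base => exact hx q.1 hpq.1
    | succ v _ ih => exact (hM.2.1 _ ih).2
  exact hy q.2 hpq.2

theorem exists_isMinGen_le (hM : IsMonIdeal M) {p : Mon} (hp : p ∈ M) :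
    ∃ q, IsMinGen M q ∧ q ≤ p := by
  obtain ⟨q, ⟨hqM, hqp⟩, hmin⟩ := (measure fun q : Mon => (q.1 + q.2).toNat).wf.has_min
    {q | q ∈ M ∧ q ≤ p} ⟨p, hp, le_rfl⟩
  obtain ⟨hq₁, hq₂⟩ := hM.1 q hqM
  refine ⟨q, ⟨hqM, fun h => hmin _ ⟨h, ?_⟩ ?_, fun h => hmin _ ⟨h, ?_⟩ ?_⟩, hqp⟩
  · exact ⟨by have := hqp.1; dsimp only; omega, hqp.2⟩
  · have := (hM.1 _ h).1
    change ((q.1 - 1) + q.2).toNat < (q.1 + q.2).toNat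
    omega
  · exact ⟨hqp.1, by have := hqp.2; dsimp only; omega⟩
  · have := (hM.1 _ h).2
    change (q.1 + (q.2 - 1)).toNat < (q.1 + q.2).toNat
    omega

theorem exists_x_pow_mem (hM : IsMonIdeal M) : ∃ N : ℕ, ((N : ℤ), 0) ∈ M := by
  by_contra! h
  refine Set.infinite_of_injective_forall_mem (f := fun n : ℕ => ((n : ℤ), (0 : ℤ)))
    (fun a b hab => by simpa using congrArg Prod.fst hab) (fun n => ?_) hM.2.2
  exact ⟨⟨Int.natCast_nonneg n, le_rfl⟩, h n⟩

end IsMonIdeal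

namespace IsGenSeq

theorem exists_le_of_mem (hM : IsMonIdeal M) (hg : IsGenSeq M e m) {p : Mon} (hp : p ∈ M) :
    ∃ j ≤ e, m j ≤ p := by
  obtain ⟨q, hq, hqp⟩ := hM.exists_isMinGen_le hp
  obtain ⟨j, hj, rfl⟩ := hg.2.2 q hq
  exact ⟨j, hj, hqp⟩

theorem fst_succ_lt (hM : IsMonIdeal M) (hg : IsGenSeq M e m) {i : ℕ} (hi : i < e) :
    (m (i + 1)).1 < (m i).1 := by
  by_contra! h
  exact (hg.1 (i + 1) hi).2.2
    (hM.mem_of_le_s3 (hg.1 i hi.le).1 ⟨h, by have := hg.2.1 i hi; dsimp only; omega⟩)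

theorem fst_add_sub_le (hM : IsMonIdeal M) (hg : IsGenSeq M e m) {i j : ℕ} (hij : i ≤ j)
    (hj : j ≤ e) : (m j).1 + ((j : ℤ) - i) ≤ (m i).1 := by
  induction j, hij using Nat.le_induction with
  | base => simp
  | succ j _ ih =>
    have := hg.fst_succ_lt hM hj
    have := ih (by omega)
    push_cast
    omega

theorem snd_mono (hg : IsGenSeq M e m) {i j : ℕ} (hij : i ≤ j) (hj : j ≤ e) :
    (m i).2 ≤ (m j).2 := by
  induction j, hij using Nat.le_induction with
  | base => exact le_rfl
  | succ j _ ih => exact (ih (by omega)).trans (hg.2.1 j hj).le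

theorem snd_zero (hM : IsMonIdeal M) (hg : IsGenSeq M e m) : (m 0).2 = 0 := by
  obtain ⟨N, hN⟩ := hM.exists_x_pow_mem
  obtain ⟨j, hj, hjN⟩ := hg.exists_le_of_mem hM hN
  have h0j := hg.snd_mono (Nat.zero_le j) hj
  have h0 : 0 ≤ (m 0).2 := (hM.1 _ (hg.1 0 (Nat.zero_le e)).1).2
  have hj0 : (m j).2 ≤ 0 := hjN.2
  omega

theorem rpow_one_w_mem (hM : IsMonIdeal M) (hg : IsGenSeq M e m) {i : ℕ} (hi : 1 ≤ i)
    (hie : i ≤ e) : rpow 1 1 1 (w m i) ∈ M := by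
  have hα := hg.fst_succ_lt hM (i := i - 1) (by omega)
  have hβ := hg.2.1 (i - 1) (by omega)
  rw [Nat.sub_add_cancel hi] at hα hβ
  refine hM.mem_of_le_s3 (hg.1 (i - 1) (by omega)).1 ⟨?_, ?_⟩ <;> simp only [rpow, w] <;> omega

end IsGenSeq

/-- Without negative arrows, `m_i r⁻¹ = x^{α_i - 1} y^{β_i + 1}` lies in `M`, since the arrow
`(i, -1)` would otherwise be significant (`w_{i+1} r⁻¹` is a multiple of `m_{i+1}`). -/
theorem rpow_neg_one_mem (hM : IsMonIdeal M) (hg : IsGenSeq M e m)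
    (hTm : Tminus 1 1 M e m = ∅) {i : ℕ} (hi : i < e) : rpow 1 1 (-1) (m i) ∈ M := by
  have hlt := hg.fst_succ_lt hM hi
  have hα := (hM.1 _ (hg.1 (i + 1) hi).1).1
  have hβ := (hM.1 _ (hg.1 i hi.le).1).2
  have hw : rpow 1 1 (-1) (w m (i + 1)) ∈ M := by
    refine hM.mem_of_le_s3 (hg.1 (i + 1) hi).1 ⟨?_, ?_⟩ <;>
      simp only [rpow, w, Nat.add_sub_cancel] <;> omega
  by_contra hmem
  have : (i, (-1 : ℤ)) ∈ Tminus 1 1 M e m :=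
    ⟨hi, le_rfl, ⟨by simp only [rpow]; omega, by simp only [rpow]; omega⟩, hmem, hw⟩
  simp [hTm] at this

theorem snd_succ (hM : IsMonIdeal M) (hg : IsGenSeq M e m) (hTm : Tminus 1 1 M e m = ∅)
    {i : ℕ} (hi : i < e) : (m (i + 1)).2 = (m i).2 + 1 := by
  obtain ⟨j, hj, hjle⟩ := hg.exists_le_of_mem hM (rpow_neg_one_mem hM hg hTm hi)
  obtain ⟨hα, hβ⟩ := hjle
  simp only [rpow] at hα hβ
  have hij : i + 1 ≤ j := by
    by_contra! hji
    have := hg.fst_add_sub_le hM (Nat.lt_succ_iff.mp hji) hi.le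
    omega
  have := hg.snd_mono hij hj
  have := hg.2.1 i hi
  omega

theorem snd_eq (hM : IsMonIdeal M) (hg : IsGenSeq M e m) (hTm : Tminus 1 1 M e m = ∅)
    {j : ℕ} (hj : j ≤ e) : (m j).2 = j := by
  induction j with
  | zero => exact hg.snd_zero hM
  | succ j ih =>
    rw [snd_succ hM hg hTm hj, ih (by omega)]
    push_cast
    rfl

theorem mem_iff (hM : IsMonIdeal M) (hg : IsGenSeq M e m) (hTm : Tminus 1 1 M e m = ∅)
    {u : ℤ} {n : ℕ} (hn : n ≤ e) : ((u, (n : ℤ)) ∈ M) ↔ (m n).1 ≤ u := by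
  refine ⟨fun h => ?_, fun h => hM.mem_of_le_s3 (hg.1 n hn).1 ⟨h, (snd_eq hM hg hTm hn).le⟩⟩
  obtain ⟨j, hj, hα, hβ⟩ := hg.exists_le_of_mem hM h
  have hjn : j ≤ n := by
    have := snd_eq hM hg hTm hj
    dsimp only at hβ
    omega
  have := hg.fst_add_sub_le hM hjn hn
  dsimp only at hα
  omega

theorem jplus_eq (hM : IsMonIdeal M) (hg : IsGenSeq M e m) (hTm : Tminus 1 1 M e m = ∅)
    {u : ℤ} {n : ℕ} (hn : n ≤ e) (hu : (m n).1 ≤ u) : jplus e m (u, (n : ℤ)) = n := by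
  refine Nat.findGreatest_eq_iff.mpr ⟨hn, fun _ => ⟨hu, (snd_eq hM hg hTm hn).le⟩, ?_⟩
  intro j hnj hje hdiv
  have hβ : (m j).2 ≤ n := hdiv.2
  have := snd_eq hM hg hTm hje
  omega

theorem w_eq (hM : IsMonIdeal M) (hg : IsGenSeq M e m) (hTm : Tminus 1 1 M e m = ∅)
    {i : ℕ} (hi : 1 ≤ i) (hie : i ≤ e) : w m i = ((m (i - 1)).1, (i : ℤ)) := by
  have hlt := hg.fst_succ_lt hM (i := i - 1) (by omega)
  rw [Nat.sub_add_cancel hi] at hlt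
  have := snd_eq hM hg hTm (j := i - 1) (by omega)
  have := snd_eq hM hg hTm hie
  refine Prod.ext ?_ ?_ <;> simp only [w] <;> omega

theorem mem_Tplus_iff (hM : IsMonIdeal M) (hg : IsGenSeq M e m) (hTm : Tminus 1 1 M e m = ∅)
    {i : ℕ} {ℓ : ℤ} (hi : 1 ≤ i) (hie : i ≤ e) (hℓ : 1 ≤ ℓ) :
    (i, ℓ) ∈ Tplus 1 1 M e m ↔
      ℓ ≤ i ∧ (m i).1 + ℓ < (m (i - ℓ.toNat)).1 ∧ (m (i - ℓ.toNat)).1 ≤ (m (i - 1)).1 + ℓ := by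
  have hβ := snd_eq hM hg hTm hie
  have hα := (hM.1 _ (hg.1 i hie).1).1
  have hm : ∀ p : Mon, p.2 = i → ℓ ≤ i → rpow 1 1 ℓ p = (p.1 + ℓ, ((i - ℓ.toNat : ℕ) : ℤ)) :=
    fun p hp hℓi => Prod.ext (by simp [rpow]) (by simp only [rpow]; omega)
  have hw := w_eq hM hg hTm hi hie
  constructor
  · rintro ⟨-, -, -, hS, hnm, hwm⟩
    have hℓi : ℓ ≤ i := by
      have := hS.2
      simp only [rpow] at this
      omega
    rw [hm _ hβ hℓi, mem_iff hM hg hTm (by omega)] at hnm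
    rw [hm _ (by rw [hw]) hℓi, mem_iff hM hg hTm (by omega), hw] at hwm
    exact ⟨hℓi, not_le.mp hnm, hwm⟩
  · rintro ⟨hℓi, hlt, hle⟩
    refine ⟨hi, hie, hℓ, ⟨by simp only [rpow]; omega, by simp only [rpow]; omega⟩, ?_, ?_⟩
    · rw [hm _ hβ hℓi, mem_iff hM hg hTm (by omega)]
      exact not_le.mpr hlt
    · rw [hm _ (by rw [hw]) hℓi, mem_iff hM hg hTm (by omega), hw]
      exact hle

theorem jplus_rpow_w (hM : IsMonIdeal M) (hg : IsGenSeq M e m) (hTm : Tminus 1 1 M e m = ∅)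
    {i : ℕ} {ℓ : ℤ} (harr : (i, ℓ) ∈ Tplus 1 1 M e m) :
    jplus e m (rpow 1 1 ℓ (w m i)) = i - ℓ.toNat := by
  obtain ⟨hi, hie, hℓ, -⟩ := id harr
  obtain ⟨hℓi, -, hle⟩ := (mem_Tplus_iff hM hg hTm hi hie hℓ).mp harr
  have : rpow 1 1 ℓ (w m i) = ((m (i - 1)).1 + ℓ, ((i - ℓ.toNat : ℕ) : ℤ)) := by
    rw [w_eq hM hg hTm hi hie]
    exact Prod.ext (by simp [rpow]) (by simp only [rpow]; omega)
  rw [this]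
  exact jplus_eq hM hg hTm (by omega) hle

theorem exists_isZSeq (hM : IsMonIdeal M) (hg : IsGenSeq M e m) (hTm : Tminus 1 1 M e m = ∅)
    {lm : ℕ → ℤ} (hlm : IsLmax (Tplus 1 1 M e m) lm) (i : ℕ) : ∃ Z, IsZSeq 1 1 e m lm i Z := by
  induction i using Nat.strong_induction_on with
  | _ i ih =>
  rcases Nat.eq_zero_or_pos i with rfl | hi
  · exact ⟨[], IsZSeq.zero⟩
  by_cases hpos : 0 < lm i
  · have harr : (i, lm i) ∈ Tplus 1 1 M e m := by
      by_contra hnot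
      exact hpos.ne' ((hlm i).2.2 fun ⟨ℓ, hℓ⟩ => hnot ((hlm i).2.1 ⟨ℓ, hℓ⟩))
    obtain ⟨Z, hZ⟩ := ih (i - (lm i).toNat) (by omega)
    exact ⟨_, IsZSeq.step hi hpos (by rwa [jplus_rpow_w hM hg hTm harr])⟩
  · obtain ⟨Z, hZ⟩ := ih (i - 1) (by omega)
    exact ⟨Z, IsZSeq.skip hi (not_lt.mp hpos) hZ⟩

theorem mem_Tplus_of_le (hM : IsMonIdeal M) (hg : IsGenSeq M e m) (hTm : Tminus 1 1 M e m = ∅)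
    {i : ℕ} {ℓ t : ℤ} (h1 : (i, 1) ∈ Tplus 1 1 M e m) (hℓ : (i, ℓ) ∈ Tplus 1 1 M e m)
    (ht : 1 ≤ t) (htℓ : t ≤ ℓ) : (i, t) ∈ Tplus 1 1 M e m := by
  have hi : 1 ≤ i := h1.1
  have hie : i ≤ e := h1.2.1
  obtain ⟨-, hgap₁, -⟩ := (mem_Tplus_iff hM hg hTm hi hie le_rfl).mp h1
  obtain ⟨hℓi, -, hℓle⟩ := (mem_Tplus_iff hM hg hTm hi hie (ht.trans htℓ)).mp hℓ
  simp only [Int.toNat_one] at hgap₁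
  have := hg.fst_add_sub_le hM (i := i - t.toNat) (j := i - 1) (by omega) (by omega)
  have := hg.fst_add_sub_le hM (i := i - ℓ.toNat) (j := i - t.toNat) (by omega) (by omega)
  refine (mem_Tplus_iff hM hg hTm hi hie ht).mpr ⟨by omega, ?_, ?_⟩ <;> omega

/-- Given `(i, 1)`, the only condition `(i, ℓ + 1)` can violate is
`α_{i-ℓ-1} ≤ α_{i-1} + ℓ + 1`, and its failure forces the gap `α_{i-ℓ} + 1 < α_{i-ℓ-1}`. -/
theorem mem_Tplus_one_of_not_mem_succ (hM : IsMonIdeal M) (hg : IsGenSeq M e m)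
    (hTm : Tminus 1 1 M e m = ∅) {i : ℕ} {ℓ : ℤ} (h1 : (i, 1) ∈ Tplus 1 1 M e m)
    (hℓ : (i, ℓ) ∈ Tplus 1 1 M e m) (hnext : (i, ℓ + 1) ∉ Tplus 1 1 M e m) (hℓi : ℓ < i) :
    (i - ℓ.toNat, 1) ∈ Tplus 1 1 M e m := by
  have hi : 1 ≤ i := h1.1
  have hie : i ≤ e := h1.2.1
  have hℓ₁ : 1 ≤ ℓ := hℓ.2.2.1
  obtain ⟨-, hgap₁, -⟩ := (mem_Tplus_iff hM hg hTm hi hie le_rfl).mp h1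
  obtain ⟨-, -, hℓle⟩ := (mem_Tplus_iff hM hg hTm hi hie hℓ₁).mp hℓ
  rw [mem_Tplus_iff hM hg hTm hi hie (by omega)] at hnext
  simp only [Int.toNat_one] at hgap₁ ⊢
  have := hg.fst_add_sub_le hM (i := i - (ℓ + 1).toNat) (j := i - 1) (by omega) (by omega)
  have hidx : i - ℓ.toNat - 1 = i - (ℓ + 1).toNat := by omega
  rw [mem_Tplus_iff hM hg hTm (by omega) (by omega) le_rfl, Int.toNat_one, hidx]
  refine ⟨by omega, ?_, by omega⟩
  by_contra! h
  exact hnext ⟨by omega, by omega, by omega⟩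

section DirectPath

variable {a b : ℤ} {lm : ℕ → ℤ} {k : ℕ}

theorem IsDirectPath.cons {D : List (ℕ × ℤ)} (hk : 1 ≤ k) (hmax : (k, lm k) ∈ Tplus a b M e m)
    (hD : IsDirectPath a b M e m lm (jplus e m (rpow a b (lm k) (w m k))) D) :
    IsDirectPath a b M e m lm k ((k, lm k) :: D) := by
  obtain ⟨hpath, Z, hZ, hD⟩ := hD
  refine ⟨⟨hmax, le_rfl, hpath⟩, _, IsZSeq.step hk (by have := hmax.2.2.1; omega) hZ, ?_⟩
  rcases hD with ⟨s, -, hs, rfl⟩ | ⟨s, z, ℓ', hz, hℓ'₁, hℓ', rfl⟩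
  · exact Or.inl ⟨s + 1, s.succ_pos, by simpa using hs, by simp⟩
  · exact Or.inr ⟨s + 1, z, ℓ', by simpa using hz, hℓ'₁, hℓ', by simp⟩

theorem isDirectPath_singleton {t : ℤ} {Z : List (ℕ × ℤ)} (hk : 1 ≤ k)
    (harr : (k, t) ∈ Tplus a b M e m) (hmax : (k, lm k) ∈ Tplus a b M e m) (ht : t ≤ lm k)
    (hZ : IsZSeq a b e m lm (jplus e m (rpow a b (lm k) (w m k))) Z) :
    IsDirectPath a b M e m lm k [(k, t)] := by
  refine ⟨⟨harr, le_rfl, trivial⟩, _, IsZSeq.step hk (by have := hmax.2.2.1; omega) hZ, ?_⟩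
  rcases ht.eq_or_lt with rfl | hlt
  · exact Or.inl ⟨1, one_pos, by simp, by simp⟩
  · exact Or.inr ⟨0, (k, lm k), t, by simp, harr.2.2.1, hlt, by simp⟩

end DirectPath

theorem exists_isDirectPath_llen_eq (hM : IsMonIdeal M) (hg : IsGenSeq M e m)
    (hTm : Tminus 1 1 M e m = ∅) {lm : ℕ → ℤ} (hlm : IsLmax (Tplus 1 1 M e m) lm) (k : ℕ)
    (h1 : (k, 1) ∈ Tplus 1 1 M e m) {ℓ : ℤ} (hℓ : 1 ≤ ℓ) (hℓk : ℓ ≤ k) :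
    ∃ P, IsDirectPath 1 1 M e m lm k P ∧ llen P = ℓ := by
  induction k using Nat.strong_induction_on generalizing ℓ with
  | _ k ih =>
  have hk : 1 ≤ k := h1.1
  have hlm₁ : 1 ≤ lm k := (hlm k).1 1 h1
  have hmax : (k, lm k) ∈ Tplus 1 1 M e m := (hlm k).2.1 ⟨1, h1⟩
  have hjump := jplus_rpow_w hM hg hTm hmax
  by_cases hle : ℓ ≤ lm k
  · obtain ⟨Z, hZ⟩ := exists_isZSeq hM hg hTm hlm (k - (lm k).toNat)
    refine ⟨[(k, ℓ)], isDirectPath_singleton hk (mem_Tplus_of_le hM hg hTm h1 hmax hℓ hle) hmax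
      hle (by rwa [hjump]), by simp [llen]⟩
  · have hnext : (k, lm k + 1) ∉ Tplus 1 1 M e m := fun h => by
      have := (hlm k).1 _ h
      omega
    have h1' := mem_Tplus_one_of_not_mem_succ hM hg hTm h1 hmax hnext (by omega)
    obtain ⟨P, hP, hlen⟩ := ih _ (by omega) h1' (ℓ := ℓ - lm k) (by omega) (by omega)
    refine ⟨(k, lm k) :: P, IsDirectPath.cons hk hmax (by rwa [hjump]), ?_⟩
    simp only [llen, List.map_cons, List.sum_cons] at hlen ⊢
    omega

end MonId

theorem directPath_exists_of_standard_lexLeast_general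
    (M : Set Mon) (hM : IsMonIdeal M) (e : ℕ) (m : ℕ → Mon)
    (hg : IsGenSeq M e m) (hTm : Tminus 1 1 M e m = ∅)
    (lm : ℕ → ℤ) (hlm : IsLmax (Tplus 1 1 M e m) lm)
    (k : ℕ) (hk : k ≤ e)
    (hr : inS (rpow 1 1 1 (m k)) ∧ rpow 1 1 1 (m k) ∉ M)
    (ℓ : ℤ) (hℓ0 : 0 < ℓ) (hℓk : ℓ ≤ (k : ℤ)) :
    ∃ P : List (ℕ × ℤ), IsDirectPath 1 1 M e m lm k P ∧ llen P = ℓ := by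
  have hk₁ : 1 ≤ k := by
    have hy : 0 ≤ (m k).2 - 1 * 1 := hr.1.2
    have := snd_eq hM hg hTm hk
    omega
  have h1 : (k, 1) ∈ Tplus 1 1 M e m :=
    ⟨hk₁, hk, le_rfl, hr.1, hr.2, hg.rpow_one_w_mem hM hk₁ hk⟩
  exact exists_isDirectPath_llen_eq hM hg hTm hlm k h1 hℓ0 hℓk

/-- Proposition `p:coeffsoffsubk`.  In the standard
grading (`a = b = 1`, `r = x/y`), let `M` be a monomial ideal of finite
colength with `T⁻(M) = ∅`.  Fix `k` with `m_k r ∈ S ∖ M`.  If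
`0 < ℓ ≤ k` and `m_k r^ℓ ∈ S ∖ M`, then there is a direct path from
`m_k` of length `ℓ`. -/
theorem directPath_exists_of_standard_lexLeast
    (M : Set Mon) (hM : IsMonIdeal M) (e : ℕ) (m : ℕ → Mon)
    (hg : IsGenSeq M e m) (hTm : Tminus 1 1 M e m = ∅)
    (lm : ℕ → ℤ) (hlm : IsLmax (Tplus 1 1 M e m) lm)
    (k : ℕ) (hk : k ≤ e)
    (hr : inS (rpow 1 1 1 (m k)) ∧ rpow 1 1 1 (m k) ∉ M)
    (ℓ : ℤ) (hℓ0 : 0 < ℓ) (hℓk : ℓ ≤ (k : ℤ))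
    (hrl : inS (rpow 1 1 ℓ (m k)) ∧ rpow 1 1 ℓ (m k) ∉ M) :
    ∃ P : List (ℕ × ℤ), IsDirectPath 1 1 M e m lm k P ∧ llen P = ℓ :=
  directPath_exists_of_standard_lexLeast_general M hM e m hg hTm lm hlm k hk hr ℓ hℓ0 hℓk
end

section
/- Let M ⊆ S = K[x,y] be a monomial ideal of finite colength (for a grading by coprime positive integers a, b). Fix a minimal generator m_k with k ≥ 1. Let ℓ_1 ≥ ℓ_2 ≥ ⋯ ≥ ℓ_s ≥ 0 be integers such that for each i a direct path p_{k,ℓ_i} from m_k of length ℓ_i exists (with p_{k,0} the empty path), and let P_1, …, P_s be paths from m_k with l(P_1) ≥ l(P_2) ≥ ⋯ ≥ l(P_s) ≥ 0. If ∏_{i=1}^s c_{p_{k,ℓ_i}} = ∏_{i=1}^s c_{P_i} as monomials in K[c_i^ℓ : (i,ℓ) ∈ T⁺(M)], then (ℓ_1, …, ℓ_s) ⪰ (l(P_1), …, l(P_s)) in the lexicographic order on ℤ^s. -/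
open MonId

/-!
Arrows along a path have strictly decreasing indices, so a path has at most one arrow at each
index `A`; let `lengthAt Q A` be its length (`0` if there is none). The monomial identity says
that both families use the same multiset of arrows, so for each `A` the values
`lengthAt (P i) A` are a permutation of the values `lengthAt (p i) A`. All direct paths from
`m_k` are truncations of the one greedy sequence `(z_1, z_2, …)`, so `lengthAt (p i) A`
decreases with `i`, and the rearrangement inequality bounds every prefix sum
`∑_{i ≤ j} lengthAt (P i) A` by the corresponding one for `p`. Summing over `A` gives
`∑_{i ≤ j} l(P_i) ≤ ∑_{i ≤ j} ℓ_i` for every `j`, and at the first index where the two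
sequences differ this forces `l(P_i) < ℓ_i`.
-/

open Finset

theorem Equiv.Perm.exists_comp_eq_of_map_univ_eq {ι α : Type*} [Fintype ι] [DecidableEq α]
    {x y : ι → α} (h : univ.val.map x = univ.val.map y) :
    ∃ σ : Equiv.Perm ι, ∀ i, y (σ i) = x i := by
  have hcard (v : α) : Fintype.card {i // x i = v} = Fintype.card {i // y i = v} := by
    have := congrArg (Multiset.count v) h
    simp only [Multiset.count_map, Fintype.card_subtype, card_def, filter_val] at this ⊢
    simpa [eq_comm] using this
  exact ⟨Equiv.ofFiberEquiv fun v => Fintype.equivOfCardEq (hcard v), Equiv.ofFiberEquiv_map _⟩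

theorem Antitone.sum_Iic_comp_perm_le {ι α : Type*} [Fintype ι] [LinearOrder ι]
    [LocallyFiniteOrderBot ι] [CommRing α] [LinearOrder α] [IsStrictOrderedRing α] {y : ι → α}
    (hy : Antitone y) (σ : Equiv.Perm ι) (j : ι) :
    ∑ i ∈ Iic j, y (σ i) ≤ ∑ i ∈ Iic j, y i := by
  have hf : Antitone fun i : ι => if i ≤ j then (1 : α) else 0 := by
    intro i i' hii'
    by_cases hi' : i' ≤ j
    · simp [hi', hii'.trans hi']
    · by_cases hi : i ≤ j <;> simp [hi, hi']
  simpa [ite_mul, sum_ite, filter_ge_eq_Iic] using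
    (hf.monovary hy).sum_mul_comp_perm_le_sum_mul (σ := σ)

theorem lex_of_forall_sum_Iic_le {ι α : Type*} [LinearOrder ι] [LocallyFiniteOrderBot ι]
    [WellFoundedLT ι] [AddCommMonoid α] [LinearOrder α] [IsOrderedCancelAddMonoid α] {x y : ι → α}
    (h : ∀ j, ∑ i ∈ Iic j, x i ≤ ∑ i ∈ Iic j, y i) :
    (∀ i, y i = x i) ∨ ∃ i, x i < y i ∧ ∀ j < i, y j = x j := by
  refine or_iff_not_imp_right.2 fun hlex i => ?_
  push Not at hlex
  induction i using WellFoundedLT.induction with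
  | ind i ih =>
    have hprefix : ∑ j ∈ Iio i, x j = ∑ j ∈ Iio i, y j :=
      sum_congr rfl fun j hj => (ih j (mem_Iio.1 hj)).symm
    have hi := h i
    rw [← Iio_insert, sum_insert notMem_Iio_self, sum_insert notMem_Iio_self, hprefix,
      add_le_add_iff_right] at hi
    exact le_antisymm
      (not_lt.1 fun hlt => let ⟨j, hj, hne⟩ := hlex i hlt; hne (ih j hj)) hi

theorem Multiset.eq_of_card_eq_of_filter_ne_eq {α : Type*} [DecidableEq α] {X Y : Multiset α}
    (c : α) (hcard : card X = card Y) (h : X.filter (· ≠ c) = Y.filter (· ≠ c)) : X = Y := by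
  have hc (Z : Multiset α) :
      Z.filter (fun x => ¬x ≠ c) = replicate (card Z - card (Z.filter (· ≠ c))) c := by
    refine Multiset.eq_replicate.2
      ⟨?_, fun x hx => of_not_not (Multiset.of_mem_filter (p := fun x => ¬x ≠ c) hx)⟩
    have := congrArg card (Multiset.filter_add_not (· ≠ c) Z)
    rw [card_add] at this
    omega
  rw [← Multiset.filter_add_not (· ≠ c) X, ← Multiset.filter_add_not (· ≠ c) Y, hc X, hc Y, h,
    hcard]

namespace MonId

theorem cP_eq_monomial (K : Type*) [CommSemiring K] (Q : List (ℕ × ℤ)) :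
    cP K Q = MvPolynomial.monomial (Multiset.toFinsupp (Q : Multiset (ℕ × ℤ))) 1 := by
  induction Q with
  | nil => simp [cP]
  | cons q Q ih =>
    rw [cP, List.map_cons, List.prod_cons, ← cP, ih, ← Multiset.cons_coe,
      ← Multiset.singleton_add, Multiset.toFinsupp_add, Multiset.toFinsupp_singleton,
      MvPolynomial.X, MvPolynomial.monomial_mul, one_mul]

theorem sum_coe_eq_of_prod_cP_eq (K : Type*) [CommSemiring K] [Nontrivial K] {ι : Type*}
    (s : Finset ι) {P Q : ι → List (ℕ × ℤ)} (h : ∏ i ∈ s, cP K (P i) = ∏ i ∈ s, cP K (Q i)) :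
    ∑ i ∈ s, (P i : Multiset (ℕ × ℤ)) = ∑ i ∈ s, (Q i : Multiset (ℕ × ℤ)) := by
  simp only [cP_eq_monomial, ← MvPolynomial.monomial_sum_one, ← map_sum] at h
  exact Multiset.toFinsupp.injective (MvPolynomial.monomial_left_injective one_ne_zero h)

theorem llen_cons (q : ℕ × ℤ) (Q : List (ℕ × ℤ)) : llen (q :: Q) = q.2 + llen Q := by
  simp [llen]

theorem llen_append (Q R : List (ℕ × ℤ)) : llen (Q ++ R) = llen Q + llen R := by
  simp [llen]

theorem llen_nonneg {Q : List (ℕ × ℤ)} (h : ∀ q ∈ Q, 0 ≤ q.2) : 0 ≤ llen Q :=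
  List.sum_nonneg fun x hx => by
    obtain ⟨q, hq, rfl⟩ := List.mem_map.1 hx
    exact h q hq

def lengthAt (Q : List (ℕ × ℤ)) (A : ℕ) : ℤ := llen (Q.filter (·.1 = A))

@[simp]
theorem lengthAt_nil (A : ℕ) : lengthAt [] A = 0 := rfl

theorem lengthAt_cons (q : ℕ × ℤ) (Q : List (ℕ × ℤ)) (A : ℕ) :
    lengthAt (q :: Q) A = (if q.1 = A then q.2 else 0) + lengthAt Q A := by
  by_cases h : q.1 = A <;> simp [lengthAt, h, llen_cons]

theorem lengthAt_nonneg {Q : List (ℕ × ℤ)} (h : ∀ q ∈ Q, 0 ≤ q.2) (A : ℕ) : 0 ≤ lengthAt Q A :=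
  llen_nonneg fun q hq => h q (List.mem_of_mem_filter hq)

theorem llen_eq_sum_lengthAt {Q : List (ℕ × ℤ)} {S : Finset ℕ} (h : ∀ q ∈ Q, q.1 ∈ S) :
    llen Q = ∑ A ∈ S, lengthAt Q A := by
  induction Q with
  | nil => simp [llen, lengthAt]
  | cons q Q ih =>
    rw [llen_cons, ih fun q' hq' => h q' (List.mem_cons_of_mem q hq')]
    simp only [lengthAt_cons, sum_add_distrib, sum_ite_eq, if_pos (h q List.mem_cons_self)]

def IsSimple (Q : List (ℕ × ℤ)) : Prop :=
  Q.Pairwise (fun q q' => q.1 ≠ q'.1) ∧ ∀ q ∈ Q, 0 < q.2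

theorem IsSimple.filter_ne_zero_lengthAt {Q : List (ℕ × ℤ)} (hQ : IsSimple Q) (A : ℕ) :
    [lengthAt Q A].filter (· ≠ 0) = (Q.filter (·.1 = A)).map Prod.snd := by
  obtain ⟨hQ, hpos⟩ := hQ
  induction Q with
  | nil => simp [lengthAt, llen]
  | cons q Q ih =>
    rw [List.pairwise_cons] at hQ
    by_cases hA : q.1 = A
    · have hQA : Q.filter (·.1 = A) = [] :=
        List.filter_eq_nil_iff.2 fun q' hq' => by simpa [← hA] using (hQ.1 q' hq').symm
      have hq : q.2 ≠ 0 := (hpos q List.mem_cons_self).ne'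
      simp [hA, hQA, hq, lengthAt, llen]
    · simpa [lengthAt_cons, hA, List.filter_cons] using
        ih hQ.2 fun q' hq' => hpos q' (List.mem_cons_of_mem q hq')

theorem filter_ne_zero_map_lengthAt {ι : Type*} (s : Finset ι) {Q : ι → List (ℕ × ℤ)}
    (hQ : ∀ i, IsSimple (Q i)) (A : ℕ) :
    (s.val.map fun i => lengthAt (Q i) A).filter (· ≠ 0) =
      ((∑ i ∈ s, (Q i : Multiset (ℕ × ℤ))).filter (·.1 = A)).map Prod.snd := by
  classical
  induction s using Finset.induction_on with
  | empty => simp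
  | insert i s hi ih =>
    rw [Finset.insert_val_of_notMem hi, Multiset.map_cons, ← Multiset.singleton_add,
      Multiset.filter_add, ih, sum_insert hi, Multiset.filter_add, Multiset.map_add]
    congr 1
    rw [← Multiset.coe_singleton, Multiset.filter_coe, Multiset.filter_coe, Multiset.map_coe,
      (hQ i).filter_ne_zero_lengthAt A]

/-- Zero lengths are invisible in the multiset of arrows; they are recovered by counting. -/
theorem map_lengthAt_eq {ι : Type*} [Fintype ι] {P Q : ι → List (ℕ × ℤ)}
    (hP : ∀ i, IsSimple (P i)) (hQ : ∀ i, IsSimple (Q i))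
    (h : ∑ i, (P i : Multiset (ℕ × ℤ)) = ∑ i, (Q i : Multiset (ℕ × ℤ))) (A : ℕ) :
    univ.val.map (fun i => lengthAt (P i) A) = univ.val.map (fun i => lengthAt (Q i) A) :=
  Multiset.eq_of_card_eq_of_filter_ne_eq 0 (by simp) <| by
    rw [filter_ne_zero_map_lengthAt _ hP, filter_ne_zero_map_lengthAt _ hQ, h]

/-- The direct path of length `ℓ` along the greedy sequence `L`: follow `L` until less than the
next arrow's length remains, then shorten that arrow. -/
def truncate : List (ℕ × ℤ) → ℤ → List (ℕ × ℤ)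
  | [], _ => []
  | z :: L, ℓ =>
    if ℓ ≤ 0 then [] else if ℓ < z.2 then [(z.1, ℓ)] else z :: truncate L (ℓ - z.2)

theorem truncate_of_nonpos (L : List (ℕ × ℤ)) {ℓ : ℤ} (hℓ : ℓ ≤ 0) : truncate L ℓ = [] := by
  cases L <;> simp [truncate, hℓ]

theorem truncate_llen_take {L : List (ℕ × ℤ)} (hL : ∀ q ∈ L, 0 < q.2) (n : ℕ) :
    truncate L (llen (L.take n)) = L.take n := by
  induction L generalizing n with
  | nil => simp [truncate]
  | cons z L ih =>
    cases n with
    | zero => simp [truncate, llen]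
    | succ n =>
      have hz := hL z List.mem_cons_self
      have htail : 0 ≤ llen (L.take n) := llen_nonneg fun q hq =>
        (hL q (List.mem_cons_of_mem z (List.mem_of_mem_take hq))).le
      rw [List.take_succ_cons, llen_cons, truncate, if_neg (by omega), if_neg (by omega),
        add_sub_cancel_left, ih fun q hq => hL q (List.mem_cons_of_mem z hq)]

theorem truncate_llen_take_add {L : List (ℕ × ℤ)} (hL : ∀ q ∈ L, 0 < q.2) {n : ℕ} {z : ℕ × ℤ}
    (hz : L[n]? = some z) {ℓ : ℤ} (hℓ : 0 < ℓ) (hℓz : ℓ < z.2) :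
    truncate L (llen (L.take n) + ℓ) = L.take n ++ [(z.1, ℓ)] := by
  induction L generalizing n with
  | nil => simp at hz
  | cons z₀ L ih =>
    cases n with
    | zero =>
      obtain rfl : z₀ = z := by simpa using hz
      simp [truncate, llen, hℓz, hℓ.not_ge]
    | succ n =>
      have hz₀ := hL z₀ List.mem_cons_self
      have htail : 0 ≤ llen (L.take n) := llen_nonneg fun q hq =>
        (hL q (List.mem_cons_of_mem z₀ (List.mem_of_mem_take hq))).le
      rw [List.take_succ_cons, llen_cons, truncate, if_neg (by omega), if_neg (by omega),
        show z₀.2 + llen (L.take n) + ℓ - z₀.2 = llen (L.take n) + ℓ by ring,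
        ih (fun q hq => hL q (List.mem_cons_of_mem z₀ hq)) (by simpa using hz),
        List.cons_append]

theorem pos_of_mem_truncate {L : List (ℕ × ℤ)} (hL : ∀ q ∈ L, 0 < q.2) {ℓ : ℤ} :
    ∀ q ∈ truncate L ℓ, 0 < q.2 := by
  induction L generalizing ℓ with
  | nil => simp [truncate]
  | cons z L ih =>
    simp only [truncate]
    split_ifs with h₀
    · simp
    · simpa using not_le.1 h₀
    · simpa [hL z List.mem_cons_self] using
        @ih (fun q hq => hL q (List.mem_cons_of_mem z hq)) (ℓ - z.2)

theorem lengthAt_truncate_mono {L : List (ℕ × ℤ)} (hL : ∀ q ∈ L, 0 < q.2) (A : ℕ) :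
    Monotone fun ℓ => lengthAt (truncate L ℓ) A := by
  induction L with
  | nil => simp [truncate, monotone_const]
  | cons z L ih =>
    have hL' : ∀ q ∈ L, 0 < q.2 := fun q hq => hL q (List.mem_cons_of_mem z hq)
    have hnn (ℓ : ℤ) : 0 ≤ lengthAt (truncate L ℓ) A :=
      lengthAt_nonneg (fun q hq => (pos_of_mem_truncate hL' q hq).le) A
    intro ℓ ℓ' hℓ
    have htail : lengthAt (truncate L (ℓ - z.2)) A ≤ lengthAt (truncate L (ℓ' - z.2)) A :=
      ih hL' (sub_le_sub_right hℓ z.2)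
    have := hnn (ℓ - z.2)
    have := hnn (ℓ' - z.2)
    have := hL z List.mem_cons_self
    simp only [truncate]
    split_ifs <;> simp only [lengthAt_cons, lengthAt_nil] <;> (try split_ifs) <;> omega

variable {a b : ℤ} {M : Set Mon} {e : ℕ} {m : ℕ → Mon} {lm : ℕ → ℤ}

theorem IsGenSeq.strictMonoOn (hg : IsGenSeq M e m) :
    StrictMonoOn (fun i => (m i).2) (Set.Iic e) :=
  strictMonoOn_Iic_of_lt_succ fun i hi => by simpa using hg.2.1 i hi

theorem pos_of_mem_Tplus {q : ℕ × ℤ} (hq : q ∈ Tplus a b M e m) : 0 < q.2 := hq.2.2.1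

theorem jplus_lt (hg : IsGenSeq M e m) (ha : 0 < a) {q : ℕ × ℤ} (hq : q ∈ Tplus a b M e m) :
    jplus e m (rpow a b q.2 (w m q.1)) < q.1 := by
  have hpos := mul_pos ha (pos_of_mem_Tplus hq)
  obtain ⟨hq1, hqe, -⟩ := hq
  by_contra! hJ
  set J := jplus e m (rpow a b q.2 (w m q.1)) with hJdef
  have hJe : J ≤ e := Nat.findGreatest_le e
  have hJdvd := (Nat.findGreatest_of_ne_zero hJdef.symm (by omega)).2
  have hw : (w m q.1).2 = (m q.1).2 :=
    max_eq_right (hg.strictMonoOn.monotoneOn (by simp; omega) (by simpa using hqe) (by omega))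
  have hmJ : (m q.1).2 ≤ (m J).2 := hg.strictMonoOn.monotoneOn (by simpa using hqe) hJe hJ
  simp only [rpow, hw] at hJdvd
  linarith

theorem IsPath.mem_Tplus {k : ℕ} {Q : List (ℕ × ℤ)} (hQ : IsPath a b M e m k Q) :
    ∀ q ∈ Q, q ∈ Tplus a b M e m := by
  induction Q generalizing k with
  | nil => simp
  | cons q Q ih =>
    obtain ⟨hq, -, hQ⟩ := hQ
    simpa [hq] using ih hQ

theorem IsPath.fst_le (hg : IsGenSeq M e m) (ha : 0 < a) {k : ℕ} {Q : List (ℕ × ℤ)}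
    (hQ : IsPath a b M e m k Q) : ∀ q ∈ Q, q.1 ≤ k := by
  induction Q generalizing k with
  | nil => simp
  | cons q Q ih =>
    obtain ⟨hq, hqk, hQ⟩ := hQ
    have := jplus_lt hg ha hq
    simp only [List.mem_cons, forall_eq_or_imp]
    exact ⟨hqk, fun q' hq' => by have := ih hQ q' hq'; omega⟩

theorem IsPath.isSimple (hg : IsGenSeq M e m) (ha : 0 < a) {k : ℕ} {Q : List (ℕ × ℤ)}
    (hQ : IsPath a b M e m k Q) : IsSimple Q := by
  refine ⟨?_, fun q hq => pos_of_mem_Tplus (hQ.mem_Tplus q hq)⟩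
  induction Q generalizing k with
  | nil => simp
  | cons q Q ih =>
    obtain ⟨hq, -, hQ⟩ := hQ
    have := jplus_lt hg ha hq
    exact List.pairwise_cons.2
      ⟨fun q' hq' => by have := hQ.fst_le hg ha q' hq'; omega, ih hQ⟩

theorem IsZSeq.pos {i : ℕ} {L : List (ℕ × ℤ)} (hL : IsZSeq a b e m lm i L) :
    ∀ q ∈ L, 0 < q.2 := by
  induction hL with
  | zero => simp
  | skip _ _ _ ih => exact ih
  | step _ hi _ ih => simpa [hi] using ih

theorem IsZSeq.unique {i : ℕ} {L L' : List (ℕ × ℤ)} (hL : IsZSeq a b e m lm i L)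
    (hL' : IsZSeq a b e m lm i L') : L = L' := by
  induction hL generalizing L' with
  | zero => cases hL' with
    | zero => rfl
    | skip hi => omega
    | step hi => omega
  | skip _ hi _ ih => cases hL' with
    | zero => omega
    | skip _ _ h => exact ih h
    | step _ hi' _ => omega
  | step _ hi _ ih => cases hL' with
    | zero => omega
    | skip _ hi' _ => omega
    | step _ _ h => rw [ih h]

theorem IsDirectPath.eq_truncate {k : ℕ} {D : List (ℕ × ℤ)}
    (hD : IsDirectPath a b M e m lm k D) :
    ∃ L, IsZSeq a b e m lm k L ∧ D = truncate L (llen D) := by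
  obtain ⟨-, L, hL, hshape⟩ := hD
  refine ⟨L, hL, ?_⟩
  rcases hshape with ⟨n, -, -, rfl⟩ | ⟨n, z, ℓ, hz, hℓ, hℓz, rfl⟩
  · exact (truncate_llen_take hL.pos n).symm
  · rw [llen_append, show llen [(z.1, ℓ)] = ℓ by simp [llen],
      truncate_llen_take_add hL.pos hz (by omega) hℓz]

theorem exists_eq_truncate_of_isDirectPath {k : ℕ} {ι : Type*} {ℓs : ι → ℤ}
    {p : ι → List (ℕ × ℤ)}
    (hp : ∀ i, (ℓs i = 0 ∧ p i = []) ∨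
      (IsDirectPath a b M e m lm k (p i) ∧ llen (p i) = ℓs i)) :
    ∃ L : List (ℕ × ℤ), (∀ q ∈ L, 0 < q.2) ∧ ∀ i, p i = truncate L (ℓs i) := by
  by_cases hdirect : ∃ i, IsDirectPath a b M e m lm k (p i)
  · obtain ⟨i₀, hi₀⟩ := hdirect
    obtain ⟨L, hL, -⟩ := hi₀.eq_truncate
    refine ⟨L, hL.pos, fun i => ?_⟩
    rcases hp i with ⟨hℓ, hpi⟩ | ⟨hpi, hℓ⟩
    · rw [hpi, truncate_of_nonpos L hℓ.le]
    · obtain ⟨L', hL', hpL'⟩ := hpi.eq_truncate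
      rwa [hL.unique hL', ← hℓ]
  · push Not at hdirect
    refine ⟨[], by simp, fun i => ?_⟩
    rcases hp i with ⟨-, hpi⟩ | ⟨hpi, -⟩
    · simp [hpi, truncate]
    · exact absurd hpi (hdirect i)

theorem sum_Iic_llen_le {ι : Type*} [Fintype ι] [LinearOrder ι] [LocallyFiniteOrderBot ι]
    {P Q : ι → List (ℕ × ℤ)} (S : Finset ℕ)
    (hP : ∀ i, IsSimple (P i)) (hQ : ∀ i, IsSimple (Q i))
    (hPS : ∀ i, ∀ q ∈ P i, q.1 ∈ S) (hQS : ∀ i, ∀ q ∈ Q i, q.1 ∈ S)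
    (hsum : ∑ i, (P i : Multiset (ℕ × ℤ)) = ∑ i, (Q i : Multiset (ℕ × ℤ)))
    (hanti : ∀ A, Antitone fun i => lengthAt (Q i) A) (j : ι) :
    ∑ i ∈ Iic j, llen (P i) ≤ ∑ i ∈ Iic j, llen (Q i) := by
  simp only [llen_eq_sum_lengthAt (hPS _), llen_eq_sum_lengthAt (hQS _)]
  rw [sum_comm, sum_comm (s := Iic j)]
  refine sum_le_sum fun A _ => ?_
  obtain ⟨σ, hσ⟩ := Equiv.Perm.exists_comp_eq_of_map_univ_eq (map_lengthAt_eq hP hQ hsum A)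
  simpa only [hσ] using (hanti A).sum_Iic_comp_perm_le σ j

end MonId

theorem directPath_products_lex_general
    (K : Type*) [Field K]
    (a b : ℤ) (ha : 1 ≤ a)
    (M : Set Mon) (e : ℕ) (m : ℕ → Mon)
    (hg : IsGenSeq M e m)
    (lm : ℕ → ℤ)
    (k : ℕ)
    (s : ℕ) (ℓs : Fin s → ℤ)
    (hmono : ∀ i j : Fin s, i ≤ j → ℓs j ≤ ℓs i)
    (p : Fin s → List (ℕ × ℤ))
    (hp : ∀ i, (ℓs i = 0 ∧ p i = []) ∨
      (IsDirectPath a b M e m lm k (p i) ∧ llen (p i) = ℓs i))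
    (P : Fin s → List (ℕ × ℤ)) (hP : ∀ i, IsPath a b M e m k (P i))
    (heq : ∏ i, cP K (p i) = ∏ i, cP K (P i)) :
    (∀ i, ℓs i = llen (P i)) ∨
      ∃ i : Fin s, llen (P i) < ℓs i ∧ ∀ j < i, ℓs j = llen (P j) := by
  have hapos : 0 < a := ha
  have hp_path (i : Fin s) : IsPath a b M e m k (p i) := by
    rcases hp i with ⟨-, hpi⟩ | ⟨hpi, -⟩
    · simp [hpi, IsPath]
    · exact hpi.1
  have hp_len (i : Fin s) : llen (p i) = ℓs i := by
    rcases hp i with ⟨hℓ, hpi⟩ | ⟨-, hℓ⟩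
    · simp [hpi, hℓ, llen]
    · exact hℓ
  obtain ⟨L, hL, hpL⟩ := exists_eq_truncate_of_isDirectPath hp
  have hprefix := sum_Iic_llen_le (Iic k)
    (fun i => (hP i).isSimple hg hapos) (fun i => (hp_path i).isSimple hg hapos)
    (fun i q hq => mem_Iic.2 ((hP i).fst_le hg hapos q hq))
    (fun i q hq => mem_Iic.2 ((hp_path i).fst_le hg hapos q hq))
    (sum_coe_eq_of_prod_cP_eq K _ heq.symm)
    (fun A i j hij => by simpa only [hpL] using lengthAt_truncate_mono hL A (hmono i j hij))
  simpa only [hp_len] using lex_of_forall_sum_Iic_le hprefix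

/-- Claim `cl:lexicographic1`.  Let `ℓ_1 ≥ ⋯ ≥ ℓ_s ≥ 0`
be such that direct paths `p_{k,ℓ_i}` from `m_k` of length `ℓ_i` exist
(the empty path for `ℓ_i = 0`), and let `P_1, …, P_s` be paths from `m_k`
with `l(P_1) ≥ ⋯ ≥ l(P_s) ≥ 0`.  If `∏ c_{p_{k,ℓ_i}} = ∏ c_{P_i}` as
monomials in `K[c_i^ℓ : (i,ℓ) ∈ T⁺(M)]`, then
`(ℓ_1, …, ℓ_s) ⪰ (l(P_1), …, l(P_s))` lexicographically. -/
theorem directPath_products_lex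
    (K : Type*) [Field K]
    (a b : ℤ) (ha : 1 ≤ a) (hb : 1 ≤ b) (hab : IsCoprime a b)
    (M : Set Mon) (hM : IsMonIdeal M) (e : ℕ) (m : ℕ → Mon)
    (hg : IsGenSeq M e m)
    (lm : ℕ → ℤ) (hlm : IsLmax (Tplus a b M e m) lm)
    (k : ℕ) (hk1 : 1 ≤ k) (hke : k ≤ e)
    (s : ℕ) (ℓs : Fin s → ℤ)
    (hmono : ∀ i j : Fin s, i ≤ j → ℓs j ≤ ℓs i) (hnn : ∀ i, 0 ≤ ℓs i)
    (p : Fin s → List (ℕ × ℤ))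
    (hp : ∀ i, (ℓs i = 0 ∧ p i = []) ∨
      (IsDirectPath a b M e m lm k (p i) ∧ llen (p i) = ℓs i))
    (P : Fin s → List (ℕ × ℤ)) (hP : ∀ i, IsPath a b M e m k (P i))
    (hPmono : ∀ i j : Fin s, i ≤ j → llen (P j) ≤ llen (P i))
    (hPnn : ∀ i, 0 ≤ llen (P i))
    (heq : ∏ i, cP K (p i) = ∏ i, cP K (P i)) :
    (∀ i, ℓs i = llen (P i)) ∨
      ∃ i : Fin s, llen (P i) < ℓs i ∧ ∀ j < i, ℓs j = llen (P j) :=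
  directPath_products_lex_general K a b ha M e m hg lm k s ℓs hmono p hp P hP heq
end

section
/- Let n ≥ 1 and let (ℓ_{i,j})_{1 ≤ i,j ≤ n} be integers such that for each fixed i the map j ↦ ℓ_{i,j} is strictly increasing, and the map j ↦ ℓ_{j,j} is nonincreasing. For a permutation σ of {1,…,n}, let Π(σ) ∈ ℤ^n be the sequence (ℓ_{1,σ(1)}, …, ℓ_{n,σ(n)}) rearranged into nonincreasing order. Then for every σ, Π(σ) ⪰ Π(id) in the lexicographic order on ℤ^n, with equality only if σ = id. -/
open Finset

/-- Counting values `≥ v` is invariant under precomposition with a permutation. -/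
private lemma count_comp_perm {n : ℕ} (g : Fin n → ℤ) (τ : Equiv.Perm (Fin n)) (v : ℤ) :
    (univ.filter fun i => v ≤ g (τ i)).card = (univ.filter fun i => v ≤ g i).card := by
  refine Finset.card_nbij' τ τ.symm ?_ ?_ ?_ ?_ <;> intro a ha <;> simp_all

/-- For an antitone function on `Fin n`, `v ≤ p k` iff the count of indices with value `≥ v`
exceeds `k`. -/
private lemma antitone_count {n : ℕ} {p : Fin n → ℤ} (hp : Antitone p) (v : ℤ) (k : Fin n) :
    v ≤ p k ↔ (k : ℕ) < (univ.filter fun i => v ≤ p i).card := by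
  constructor
  · intro h
    have hsub : Finset.Iic k ⊆ univ.filter fun i => v ≤ p i := by
      intro j hj
      simp only [Finset.mem_Iic] at hj
      simp only [Finset.mem_filter, Finset.mem_univ, true_and]
      exact h.trans (hp hj)
    have := Finset.card_le_card hsub
    rw [Fin.card_Iic] at this
    omega
  · intro h
    by_contra hv
    have hsub : (univ.filter fun i => v ≤ p i) ⊆ Finset.Iio k := by
      intro j hj
      simp only [Finset.mem_filter, Finset.mem_univ, true_and] at hj
      simp only [Finset.mem_Iio]
      by_contra hk
      push_neg at hk
      exact hv (hj.trans (hp hk))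
    have := Finset.card_le_card hsub
    rw [Fin.card_Iio] at this
    omega

/-- Key lemma: if the antitone rearrangement of `i ↦ ℓ i (σ i)` agrees with the diagonal on
the first `m` positions, then `σ` fixes the first `m` positions. -/
private lemma sigma_fix {n : ℕ} (ℓ : Fin n → Fin n → ℤ)
    (hrow : ∀ i : Fin n, StrictMono (ℓ i))
    (σ : Equiv.Perm (Fin n)) (p : Fin n → ℤ) (hp : Antitone p)
    (τ : Equiv.Perm (Fin n)) (hpτ : ∀ i, p i = ℓ (τ i) (σ (τ i))) :
    ∀ m : ℕ, (∀ j : Fin n, (j : ℕ) < m → p j = ℓ j j) → ∀ j : Fin n, (j : ℕ) < m → σ j = j := by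
  intro m
  induction m with
  | zero => intro _ j hj; omega
  | succ m ih =>
    intro hm j hj
    have hfix : ∀ j : Fin n, (j : ℕ) < m → σ j = j :=
      ih (fun j hj => hm j (Nat.lt_succ_of_lt hj))
    rcases Nat.lt_or_ge (j : ℕ) m with h | h
    · exact hfix j h
    have hjm : (j : ℕ) = m := le_antisymm (Nat.lt_succ_iff.mp hj) h
    by_contra hne
    -- σ j cannot be below j (all indices below j are fixed), hence σ j > j
    have hσj : j < σ j := by
      rcases lt_trichotomy (σ j) j with h' | h' | h'
      · have h'' : ((σ j : Fin n) : ℕ) < m := by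
          have := Fin.lt_iff_val_lt_val.mp h'; omega
        have := hfix (σ j) h''
        exact absurd (σ.injective this) (fun e => hne e)
      · exact absurd h' hne
      · exact h'
    set g : Fin n → ℤ := fun i => ℓ i (σ i) with hg
    have hw : ℓ j j < g j := hrow j hσj
    set w : ℤ := g j with hwdef
    have hpj : p j = ℓ j j := hm j hj
    -- counts of values ≥ w agree for p and g
    have hcount : (univ.filter fun i => w ≤ p i).card = (univ.filter fun i => w ≤ g i).card := by
      have : (univ.filter fun i => w ≤ p i) = (univ.filter fun i => w ≤ g (τ i)) := by
        apply Finset.filter_congr; intro i _; rw [hpτ i]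
      rw [this, count_comp_perm]
    -- the filter for p is contained in the filter for g minus j
    have hsub : (univ.filter fun i => w ≤ p i) ⊆ (univ.filter fun i => w ≤ g i).erase j := by
      intro i hi
      simp only [Finset.mem_filter, Finset.mem_univ, true_and] at hi
      have hij : i < j := by
        by_contra hk
        push_neg at hk
        have : p i ≤ p j := hp hk
        omega
      have him : (i : ℕ) < m := by
        have := Fin.lt_iff_val_lt_val.mp hij; omega
      have hgi : g i = p i := by
        rw [hg]; simp only
        rw [hfix i him, ← hm i (Nat.lt_succ_of_lt him)]
      rw [Finset.mem_erase]
      refine ⟨fun e => absurd e (ne_of_lt hij), ?_⟩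
      simp only [Finset.mem_filter, Finset.mem_univ, true_and]
      omega
    have hjmem : j ∈ (univ.filter fun i => w ≤ g i) := by
      simp only [Finset.mem_filter, Finset.mem_univ, true_and]
      rw [hwdef]
    have hcard := Finset.card_le_card hsub
    rw [Finset.card_erase_of_mem hjmem] at hcard
    have hpos : 1 ≤ (univ.filter fun i => w ≤ g i).card := Finset.card_pos.mpr ⟨j, hjmem⟩
    omega

/-- Claim `cl:lexicographic2`.  Let `(ℓ_{i,j})` be an
`n × n` array of integers (`n ≥ 1`) such that each row `j ↦ ℓ_{i,j}` is
strictly increasing and the diagonal `j ↦ ℓ_{j,j}` is nonincreasing.  For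
a permutation `σ`, let `Π(σ)` be the nonincreasing rearrangement of
`(ℓ_{1,σ(1)}, …, ℓ_{n,σ(n)})`.  Then `Π(σ) ⪰ Π(id)` lexicographically,
with equality only if `σ = id`. -/
theorem nonincreasing_rearrangement_lex_min_at_id
    (n : ℕ) (hn : 1 ≤ n) (ℓ : Fin n → Fin n → ℤ)
    (hrow : ∀ i : Fin n, StrictMono (ℓ i))
    (hdiag : ∀ j j' : Fin n, j ≤ j' → ℓ j' j' ≤ ℓ j j)
    (σ : Equiv.Perm (Fin n))
    (pσ pid : Fin n → ℤ)
    (hσanti : Antitone pσ) (hidanti : Antitone pid)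
    (hσrearr : ∃ τ : Equiv.Perm (Fin n), ∀ i, pσ i = ℓ (τ i) (σ (τ i)))
    (hidrearr : ∃ τ : Equiv.Perm (Fin n), ∀ i, pid i = ℓ (τ i) (τ i)) :
    (pσ = pid ∨ ∃ i : Fin n, pid i < pσ i ∧ ∀ j < i, pσ j = pid j) ∧
      (pσ = pid → σ = 1) := by
  obtain ⟨τσ, hτσ⟩ := hσrearr
  obtain ⟨τd, hτd⟩ := hidrearr
  -- the diagonal is antitone
  set d : Fin n → ℤ := fun i => ℓ i i with hd
  have hdanti : Antitone d := fun a b hab => hdiag a b hab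
  -- pid equals the diagonal
  have hpid : ∀ i : Fin n, pid i = d i := by
    have hcount : ∀ v : ℤ,
        (univ.filter fun i => v ≤ pid i).card = (univ.filter fun i => v ≤ d i).card := by
      intro v
      have : (univ.filter fun i => v ≤ pid i) = (univ.filter fun i => v ≤ d (τd i)) := by
        apply Finset.filter_congr; intro i _; rw [hτd i]
      rw [this, count_comp_perm]
    intro i
    apply le_antisymm
    · have h1 := (antitone_count hidanti (pid i) i).mp le_rfl
      rw [hcount] at h1
      exact (antitone_count hdanti (pid i) i).mpr h1
    · have h1 := (antitone_count hdanti (d i) i).mp le_rfl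
      rw [← hcount] at h1
      exact (antitone_count hidanti (d i) i).mpr h1
  constructor
  · by_cases heq : pσ = pid
    · exact Or.inl heq
    · right
      -- take the minimal index of disagreement
      have hne : (univ.filter fun i => pσ i ≠ pid i).Nonempty := by
        by_contra hempty
        apply heq
        funext i
        by_contra hi
        exact hempty ⟨i, by simp [hi]⟩
      set k := (univ.filter fun i => pσ i ≠ pid i).min' hne with hk
      have hkne : pσ k ≠ pid k := by
        have := (univ.filter fun i => pσ i ≠ pid i).min'_mem hne
        simp only [Finset.mem_filter] at this
        exact this.2
      have hmin : ∀ j < k, pσ j = pid j := by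
        intro j hjk
        by_contra hj
        have : k ≤ j := Finset.min'_le _ j (by simp [hj])
        exact absurd hjk (not_lt.mpr this)
      refine ⟨k, ?_, hmin⟩
      -- σ fixes everything below k
      have hfix : ∀ j : Fin n, (j : ℕ) < (k : ℕ) → σ j = j := by
        apply sigma_fix ℓ hrow σ pσ hσanti τσ hτσ
        intro j hj
        have hjk : j < k := Fin.lt_iff_val_lt_val.mpr hj
        rw [hmin j hjk, hpid j]
      -- σ k is not below k
      have hσk : k ≤ σ k := by
        by_contra h
        push_neg at h
        have h' : ((σ k : Fin n) : ℕ) < (k : ℕ) := Fin.lt_iff_val_lt_val.mp h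
        have := hfix (σ k) h'
        have := σ.injective this
        rw [this] at h
        exact lt_irrefl _ h
      -- hence ℓ k k ≤ pσ k, and strictly since pσ k ≠ pid k = ℓ k k
      set g : Fin n → ℤ := fun i => ℓ i (σ i) with hgdef
      have hle : ℓ k k ≤ pσ k := by
        rw [antitone_count hσanti (ℓ k k) k]
        have heq1 : (univ.filter fun i => ℓ k k ≤ pσ i).card
            = (univ.filter fun i => ℓ k k ≤ g i).card := by
          have heq0 : (univ.filter fun i => ℓ k k ≤ pσ i)
              = (univ.filter fun i => ℓ k k ≤ g (τσ i)) := by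
            apply Finset.filter_congr; intro i _
            have : pσ i = g (τσ i) := hτσ i
            rw [this]
          rw [heq0]
          exact count_comp_perm g τσ (ℓ k k)
        rw [heq1]
        have hsub : Finset.Iic k ⊆ univ.filter fun i => ℓ k k ≤ g i := by
          intro i hi
          simp only [Finset.mem_Iic] at hi
          simp only [Finset.mem_filter, Finset.mem_univ, true_and]
          rcases lt_or_eq_of_le hi with hik | hik
          · show ℓ k k ≤ ℓ i (σ i)
            rw [hfix i (Fin.lt_iff_val_lt_val.mp hik)]
            exact hdiag i k hi
          · rw [hik]
            exact (hrow k).monotone hσk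
        have := Finset.card_le_card hsub
        rw [Fin.card_Iic] at this
        omega
      have : pid k = ℓ k k := hpid k
      rcases lt_or_eq_of_le hle with h | h
      · omega
      · exact absurd (by omega : pσ k = pid k) hkne
  · intro heq
    have hfix : ∀ j : Fin n, (j : ℕ) < n → σ j = j := by
      apply sigma_fix ℓ hrow σ pσ hσanti τσ hτσ
      intro j _
      rw [heq, hpid j]
    exact Equiv.ext fun x => (hfix x x.isLt).trans rfl
end

section
/- Give S = K[x,y] the standard grading deg(x) = deg(y) = 1, let h : ℤ_{≥0} → ℤ_{≥0} be the Hilbert function of some monomial ideal of S of finite colength, and let M⁻ and M⁺ be the lex-least and lex-most monomial ideals with Hilbert function h. Suppose I ⊆ S is a homogeneous ideal with dim_K (S/I)_d = h(d) for all d ≥ 0 such that for every d ≥ 0, every nonzero homogeneous polynomial in I of degree d has at least h(d) + 1 monomials in its support (i.e. every degree-d matroid of the tropicalization of I is uniform). Then in_≺(I) = M⁻ and in_{≺ᵒᵖᵖ}(I) = M⁺, where ≺ is the lexicographic order with x ≺ y and ≺ᵒᵖᵖ the lexicographic order with y ≺ x. -/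
namespace MonId

/-- The lex-least monomial ideal with Hilbert function `h` in the
standard grading: all monomials `x^α y^β` with `β ≥ h(α + β)`. -/
def MminusSet (h : ℕ → ℕ) : Set Mon :=
  {p | inS p ∧ ((h ((p.1 + p.2).toNat) : ℤ) ≤ p.2)}

/-- The lex-most monomial ideal with Hilbert function `h` in the
standard grading: all monomials `x^α y^β` with `α ≥ h(α + β)`. -/
def MplusSet (h : ℕ → ℕ) : Set Mon :=
  {p | inS p ∧ ((h ((p.1 + p.2).toNat) : ℤ) ≤ p.1)}

end MonId

open MonId

/-!
In degree `d`, the forms of `I` have codimension `h d` in the `(d + 1)`-dimensional space of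
forms, and each nonzero one has at least `h d + 1` terms. A monomial of degree `d` is determined
by its `y`-exponent, so a form of `I` whose terms all have `y`-exponent at most `u` has at most
`u + 1` terms: the leading monomial of any element of `I` satisfies `h d ≤ u`, i.e. lies in `M⁻`.
Conversely, `I_d` meets the span of any `h d + 1` monomials of degree `d` nontrivially, and a
nonzero form in that intersection must use all of them. Taking the monomials with `y`-exponent in
`[u - h d, u]` yields an element of `I` with leading monomial `x^(d - u) y^u` whenever
`h d ≤ u`. Exchanging `x` and `y` gives `M⁺`.
-/

open MvPolynomial Module Finset

theorem Submodule.finrank_map_add_finrank_inf_ker {K V V₂ : Type*} [DivisionRing K]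
    [AddCommGroup V] [Module K V] [AddCommGroup V₂] [Module K V₂]
    (f : V →ₗ[K] V₂) (p : Submodule K V) [FiniteDimensional K p] :
    finrank K (p.map f) + finrank K ↥(p ⊓ LinearMap.ker f) = finrank K p := by
  rw [← (f.domRestrict p).finrank_range_add_finrank_ker, LinearMap.range_domRestrict,
    LinearMap.ker_domRestrict, ← Submodule.finrank_map_subtype_eq, Submodule.map_comap_subtype]

namespace Finsupp

theorem mem_finsuppAntidiag_univ {σ : Type*} [Fintype σ] [DecidableEq σ] {t : σ →₀ ℕ} {d : ℕ} :
    t ∈ finsuppAntidiag univ d ↔ t.degree = d := by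
  simp [degree_eq_sum]

theorem degree_fin_two (t : Fin 2 →₀ ℕ) : t.degree = t 0 + t 1 := by
  simp [degree_eq_sum, Fin.sum_univ_two]

theorem eq_of_degree_eq_of_apply_eq {s t : Fin 2 →₀ ℕ} (j : Fin 2) (hd : s.degree = t.degree)
    (hj : s j = t j) : s = t := by
  rw [degree_fin_two, degree_fin_two] at hd
  ext i
  fin_cases i <;> fin_cases j <;> simp_all

theorem exists_degree_eq_apply_eq (j : Fin 2) {d u : ℕ} (hu : u ≤ d) :
    ∃ t : Fin 2 →₀ ℕ, t.degree = d ∧ t j = u := by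
  refine ⟨single j u + single (1 - j) (d - u), ?_, by fin_cases j <;> simp⟩
  rw [degree_fin_two]
  fin_cases j <;> simp <;> omega

theorem card_filter_finsuppAntidiag_apply_mem (j : Fin 2) {d : ℕ} {A : Finset ℕ}
    (hA : ∀ u ∈ A, u ≤ d) : #{t ∈ finsuppAntidiag univ d | t j ∈ A} = #A := by
  refine card_nbij (· j) (fun t ht => (mem_filter.mp ht).2) ?_ ?_
  · intro s hs t ht hst
    simp only [coe_filter, mem_finsuppAntidiag_univ] at hs ht
    exact eq_of_degree_eq_of_apply_eq j (hs.1.trans ht.1.symm) hst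
  · intro u hu
    obtain ⟨t, htd, htj⟩ := exists_degree_eq_apply_eq j (hA u hu)
    exact ⟨t, mem_filter.mpr ⟨mem_finsuppAntidiag_univ.mpr htd, htj ▸ hu⟩, htj⟩

theorem card_finsuppAntidiag_fin_two (d : ℕ) :
    #(finsuppAntidiag (univ : Finset (Fin 2)) d) = d + 1 := by
  have hcount := card_filter_finsuppAntidiag_apply_mem 0 (A := range (d + 1))
    fun u hu => Nat.lt_succ_iff.mp (mem_range.mp hu)
  rwa [filter_true_of_mem, card_range] at hcount
  intro t ht
  exact mem_range.mpr (Nat.lt_succ_of_le ((mem_finsuppAntidiag_univ.mp ht) ▸ le_degree 0 t))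

end Finsupp

namespace MvPolynomial

variable {σ K : Type*} [Field K]

instance (s : Finset (σ →₀ ℕ)) : FiniteDimensional K (restrictSupport K (s : Set (σ →₀ ℕ))) :=
  .of_basis (basisRestrictSupport K _)

theorem finrank_restrictSupport (s : Finset (σ →₀ ℕ)) :
    finrank K (restrictSupport K (s : Set (σ →₀ ℕ))) = #s := by
  simp [finrank_eq_card_basis (basisRestrictSupport K _)]

theorem homogeneousSubmodule_eq_restrictSupport [Fintype σ] [DecidableEq σ] (d : ℕ) :
    homogeneousSubmodule σ K d =
      restrictSupport K (finsuppAntidiag univ d : Finset (σ →₀ ℕ)) := by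
  rw [homogeneousSubmodule_eq_finsupp_supported]
  congr
  ext t
  exact Finsupp.mem_finsuppAntidiag_univ.symm

theorem exists_mem_support_eq_of_card_le {s T : Finset (σ →₀ ℕ)}
    {W : Submodule K (MvPolynomial σ K)} {r : ℕ}
    (hWs : W ≤ restrictSupport K s) (hdim : #s ≤ finrank K W + r)
    (hsupp : ∀ f ∈ W, f ≠ 0 → r < #f.support) (hTs : T ⊆ s) (hT : #T = r + 1) :
    ∃ f ∈ W, f.support = T := by
  have : FiniteDimensional K W := Submodule.finiteDimensional_of_le hWs
  have hsup : finrank K ↥(W ⊔ restrictSupport K T) ≤ #s :=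
    (Submodule.finrank_mono (sup_le hWs (restrictSupport_mono K (coe_subset.mpr hTs)))).trans_eq
      (finrank_restrictSupport s)
  have hinf := Submodule.finrank_sup_add_finrank_inf_eq W (restrictSupport K T)
  rw [finrank_restrictSupport] at hinf
  have hpos : 1 ≤ finrank K ↥(W ⊓ restrictSupport K T) := by omega
  obtain ⟨f, hf, hf0⟩ := Submodule.exists_mem_ne_zero_of_ne_bot
    (Submodule.one_le_finrank_iff.mp hpos)
  obtain ⟨hfW, hfT⟩ := Submodule.mem_inf.mp hf
  exact ⟨f, hfW, eq_of_subset_of_card_le (coe_subset.mp hfT) (hT ▸ hsupp f hfW hf0)⟩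

end MvPolynomial

namespace MonId

variable {K : Type*} [Field K]

theorem monOf_natCast (t : Fin 2 →₀ ℕ) : monOf K ((t 0 : ℤ), (t 1 : ℤ)) = monomial t 1 := by
  rw [monOf, Int.toNat_natCast, Int.toNat_natCast, X_pow_eq_monomial, X_pow_eq_monomial,
    monomial_mul, one_mul]
  congr
  ext i
  fin_cases i <;> simp

theorem inS_iff_exists_natCast {p : Mon} :
    inS p ↔ ∃ t : Fin 2 →₀ ℕ, ((t 0 : ℤ), (t 1 : ℤ)) = p := by
  refine ⟨fun hp => ⟨Finsupp.single 0 p.1.toNat + Finsupp.single 1 p.2.toNat, ?_⟩, ?_⟩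
  · ext <;> simp [hp.1, hp.2]
  · rintro ⟨t, rfl⟩
    exact ⟨Int.natCast_nonneg _, Int.natCast_nonneg _⟩

theorem monOf_image_eq {A : Set Mon} (hA : ∀ p ∈ A, inS p) :
    monOf K '' A = (monomial · (1 : K)) '' {t : Fin 2 →₀ ℕ | ((t 0 : ℤ), (t 1 : ℤ)) ∈ A} := by
  ext g
  constructor
  · rintro ⟨p, hp, rfl⟩
    obtain ⟨t, rfl⟩ := inS_iff_exists_natCast.mp (hA p hp)
    exact ⟨t, hp, (monOf_natCast t).symm⟩
  · rintro ⟨t, ht, rfl⟩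
    exact ⟨_, ht, monOf_natCast t⟩

theorem idealOf_MminusSet (h : ℕ → ℕ) :
    idealOf K (MminusSet h) = Ideal.span ((monomial · (1 : K)) '' {t | h t.degree ≤ t 1}) := by
  rw [idealOf, monOf_image_eq fun p hp => hp.1]
  congr
  ext t
  simp only [MminusSet, inS, Set.mem_ofPred_eq, Nat.cast_nonneg, and_self, true_and,
    ← Nat.cast_add, Int.toNat_natCast, Nat.cast_le, Finsupp.degree_fin_two]

theorem idealOf_MplusSet (h : ℕ → ℕ) :
    idealOf K (MplusSet h) = Ideal.span ((monomial · (1 : K)) '' {t | h t.degree ≤ t 0}) := by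
  rw [idealOf, monOf_image_eq fun p hp => hp.1]
  congr
  ext t
  simp only [MplusSet, inS, Set.mem_ofPred_eq, Nat.cast_nonneg, and_self, true_and,
    ← Nat.cast_add, Int.toNat_natCast, Nat.cast_le, Finsupp.degree_fin_two]

theorem finrank_inf_add_HF (I : Ideal (MvPolynomial (Fin 2) K)) (d : ℕ) :
    finrank K ↥(homogeneousSubmodule (Fin 2) K d ⊓ I.restrictScalars K) + HF K ![1, 1] I d
      = d + 1 := by
  have hweight : (![1, 1] : Fin 2 → ℕ) = 1 := by
    ext i
    fin_cases i <;> rfl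
  have hker : LinearMap.ker (Ideal.Quotient.mkₐ K I).toLinearMap = I.restrictScalars K := by
    ext f
    simp [Ideal.Quotient.eq_zero_iff_mem]
  rw [HF, hweight, weightedHomogeneousSubmodule_one, homogeneousSubmodule_eq_restrictSupport,
    add_comm, ← hker, Submodule.finrank_map_add_finrank_inf_ker, finrank_restrictSupport,
    Finsupp.card_finsuppAntidiag_fin_two]

section Leading

variable {h : ℕ → ℕ} {I : Ideal (MvPolynomial (Fin 2) K)}

theorem le_apply_of_leading (j : Fin 2) {le : (Fin 2 →₀ ℕ) → (Fin 2 →₀ ℕ) → Prop}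
    (hle : ∀ s t : Fin 2 →₀ ℕ, s.degree = t.degree → le s t → s j ≤ t j)
    (hhom : ∀ f ∈ I, ∀ d : ℕ, homogeneousComponent d f ∈ I)
    (hsupp : ∀ d : ℕ, ∀ f ∈ I, f.IsHomogeneous d → f ≠ 0 → h d + 1 ≤ f.support.card)
    {f : MvPolynomial (Fin 2) K} (hfI : f ∈ I) {s : Fin 2 →₀ ℕ} (hs : s ∈ f.support)
    (hmax : ∀ t ∈ f.support, le t s) : h s.degree ≤ s j := by
  set g := homogeneousComponent s.degree f
  have hg : g.support = {t ∈ f.support | t.degree = s.degree} := support_homogeneousComponent _ _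
  have hg0 : g ≠ 0 := support_nonempty.mp ⟨s, by simp [hg, hs]⟩
  have hgs : g.support ⊆
      {t ∈ finsuppAntidiag (univ : Finset (Fin 2)) s.degree | t j ∈ range (s j + 1)} := by
    intro t ht
    rw [hg, mem_filter] at ht
    refine mem_filter.mpr ⟨Finsupp.mem_finsuppAntidiag_univ.mpr ht.2, ?_⟩
    exact mem_range.mpr (Nat.lt_succ_of_le (hle t s ht.2 (hmax t ht.1)))
  have hcard := (hsupp _ g (hhom f hfI _) (homogeneousComponent_isHomogeneous _ f) hg0).trans
    (card_le_card hgs)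
  rw [Finsupp.card_filter_finsuppAntidiag_apply_mem, card_range] at hcard
  · omega
  · exact fun u hu => (Nat.lt_succ_iff.mp (mem_range.mp hu)).trans (Finsupp.le_degree j s)

theorem exists_mem_support_forall_apply_le (j : Fin 2)
    (hHF : ∀ d : ℕ, HF K ![1, 1] I d = h d)
    (hsupp : ∀ d : ℕ, ∀ f ∈ I, f.IsHomogeneous d → f ≠ 0 → h d + 1 ≤ f.support.card)
    {t : Fin 2 →₀ ℕ} (ht : h t.degree ≤ t j) :
    ∃ f ∈ I, t ∈ f.support ∧ ∀ s ∈ f.support, s.degree = t.degree ∧ s j ≤ t j := by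
  set d := t.degree
  set W := homogeneousSubmodule (Fin 2) K d ⊓ I.restrictScalars K
  have hdim : #(finsuppAntidiag (univ : Finset (Fin 2)) d) ≤ finrank K W + h d := by
    rw [Finsupp.card_finsuppAntidiag_fin_two, ← hHF, finrank_inf_add_HF]
  have hWsupp : ∀ f ∈ W, f ≠ 0 → h d < #f.support := fun f hf hf0 =>
    hsupp d f (Submodule.mem_inf.mp hf).2 (Submodule.mem_inf.mp hf).1 hf0
  have htd : t j ≤ d := Finsupp.le_degree j t
  have hT :
      #{s ∈ finsuppAntidiag (univ : Finset (Fin 2)) d | s j ∈ Icc (t j - h d) (t j)} = h d + 1 := by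
    rw [Finsupp.card_filter_finsuppAntidiag_apply_mem _ fun u hu => (mem_Icc.mp hu).2.trans htd,
      Nat.card_Icc]
    omega
  obtain ⟨f, hfW, hfT⟩ := exists_mem_support_eq_of_card_le
    (inf_le_left.trans (homogeneousSubmodule_eq_restrictSupport d).le) hdim hWsupp
    (filter_subset _ _) hT
  refine ⟨f, (Submodule.mem_inf.mp hfW).2, ?_, fun s hs => ?_⟩
  · rw [hfT, mem_filter, Finsupp.mem_finsuppAntidiag_univ, mem_Icc]
    exact ⟨rfl, Nat.sub_le _ _, le_rfl⟩
  · rw [hfT, mem_filter, Finsupp.mem_finsuppAntidiag_univ, mem_Icc] at hs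
    exact ⟨hs.1, hs.2.2⟩

theorem initialIdeal_eq_span_monomial (j : Fin 2) {le : (Fin 2 →₀ ℕ) → (Fin 2 →₀ ℕ) → Prop}
    (hle : ∀ s t : Fin 2 →₀ ℕ, s.degree = t.degree → (le s t ↔ s j ≤ t j))
    (hhom : ∀ f ∈ I, ∀ d : ℕ, homogeneousComponent d f ∈ I)
    (hHF : ∀ d : ℕ, HF K ![1, 1] I d = h d)
    (hsupp : ∀ d : ℕ, ∀ f ∈ I, f.IsHomogeneous d → f ≠ 0 → h d + 1 ≤ f.support.card) :
    initialIdeal K le I = Ideal.span ((monomial · (1 : K)) '' {t | h t.degree ≤ t j}) := by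
  apply le_antisymm <;> rw [initialIdeal, Ideal.span_le]
  · rintro _ ⟨f, hfI, -, s, hs, hmax, rfl⟩
    exact Ideal.subset_span
      ⟨s, le_apply_of_leading j (fun s t hst => (hle s t hst).mp) hhom hsupp hfI hs hmax, rfl⟩
  · rintro _ ⟨t, ht, rfl⟩
    obtain ⟨f, hfI, htf, hmax⟩ := exists_mem_support_forall_apply_le j hHF hsupp ht
    refine Ideal.subset_span ⟨f, hfI, support_nonempty.mp ⟨t, htf⟩, t, htf, fun s hs => ?_, rfl⟩
    exact (hle s t (hmax s hs).1).mpr (hmax s hs).2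

end Leading

end MonId

theorem uniform_tropicalization_forces_initial_ideals_general
    (K : Type*) [Field K]
    (h : ℕ → ℕ)
    (I : Ideal (MvPolynomial (Fin 2) K))
    (hhom : ∀ f ∈ I, ∀ d : ℕ, MvPolynomial.homogeneousComponent d f ∈ I)
    (hHF : ∀ d : ℕ, HF K ![1, 1] I d = h d)
    (hsupp : ∀ d : ℕ, ∀ f ∈ I, f.IsHomogeneous d → f ≠ 0 →
      h d + 1 ≤ f.support.card) :
    initialIdeal K lexYle I = idealOf K (MminusSet h) ∧
    initialIdeal K lexXle I = idealOf K (MplusSet h) := by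
  have hY (s t : Fin 2 →₀ ℕ) (hst : s.degree = t.degree) : lexYle s t ↔ s 1 ≤ t 1 := by
    rw [Finsupp.degree_fin_two, Finsupp.degree_fin_two] at hst
    unfold lexYle
    omega
  have hX (s t : Fin 2 →₀ ℕ) (hst : s.degree = t.degree) : lexXle s t ↔ s 0 ≤ t 0 := by
    rw [Finsupp.degree_fin_two, Finsupp.degree_fin_two] at hst
    unfold lexXle
    omega
  exact ⟨(initialIdeal_eq_span_monomial 1 hY hhom hHF hsupp).trans (idealOf_MminusSet h).symm,
    (initialIdeal_eq_span_monomial 0 hX hhom hHF hsupp).trans (idealOf_MplusSet h).symm⟩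

/-- Remark `rem:InitialRowReduction`.  In the standard
grading, let `h` be the Hilbert function of a finite-colength monomial
ideal, with lex-least and lex-most ideals `M⁻` and `M⁺`.  If `I` is a
homogeneous ideal with Hilbert function `h` such that every nonzero
degree-`d` homogeneous polynomial of `I` has at least `h(d) + 1` monomials
in its support (for every `d`), then `in_≺(I) = M⁻` and
`in_{≺ᵒᵖᵖ}(I) = M⁺`. -/
theorem uniform_tropicalization_forces_initial_ideals
    (K : Type*) [Field K]
    (h : ℕ → ℕ) (hId : IsMonIdeal (MminusSet h))
    (I : Ideal (MvPolynomial (Fin 2) K))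
    (hhom : ∀ f ∈ I, ∀ d : ℕ, MvPolynomial.homogeneousComponent d f ∈ I)
    (hHF : ∀ d : ℕ, HF K ![1, 1] I d = h d)
    (hsupp : ∀ d : ℕ, ∀ f ∈ I, f.IsHomogeneous d → f ≠ 0 →
      h d + 1 ≤ f.support.card) :
    initialIdeal K lexYle I = idealOf K (MminusSet h) ∧
    initialIdeal K lexXle I = idealOf K (MplusSet h) :=
  uniform_tropicalization_forces_initial_ideals_general K h I hhom hHF hsupp
end
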